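/- arXiv:2207.14282 — 7 statements merged into one kernel-verified Lean document; each statement's English description precedes it below -/
import Mathlib

section
/- Let X be a topological space, Y a compact topological space, and f : X × Y → [−∞,+∞] (EReal) be lower semicontinuous with respect to the product topology. Then the function x ↦ ⨅_{y ∈ Y} f(x, y) is lower semicontinuous on X. -/
/-- **Lower semicontinuity of the infimum over a compact space.**
Let `X` be a topological space, `Y` a compact topological space, and
`f : X × Y → EReal` be lower semicontinuous with respect to the product topology.
Then `x ↦ ⨅ y, f (x, y)` is lower semicontinuous on `X`. -/
theorem lowerSemicontinuous_iInf_of_compact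
    {X Y : Type*} [TopologicalSpace X] [TopologicalSpace Y] [CompactSpace Y]
    (f : X × Y → EReal) (hf : LowerSemicontinuous f) :
    LowerSemicontinuous fun x : X => ⨅ y : Y, f (x, y) := by
  intro x c hc
  obtain ⟨c', hcc', hc'⟩ := exists_between hc
  -- for each y, get open boxes U y × V y on which f > c'
  have key : ∀ y : Y, ∃ U V : Set _, IsOpen U ∧ x ∈ U ∧ IsOpen V ∧ y ∈ V ∧
      ∀ p ∈ U ×ˢ V, c' < f p := by
    intro y
    have hy : c' < f (x, y) := lt_of_lt_of_le hc' (iInf_le _ y)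
    have := hf (x, y) c' hy
    rw [Filter.eventually_iff, mem_nhds_prod_iff'] at this
    obtain ⟨U, V, hU, hxU, hV, hyV, hsub⟩ := this
    exact ⟨U, V, hU, hxU, hV, hyV, fun p hp => hsub hp⟩
  choose U V hU hxU hV hyV hgt using key
  -- compactness: finite subcover of Y by the V y
  obtain ⟨t, ht⟩ := IsCompact.elim_finite_subcover isCompact_univ V hV
    (fun y _ => Set.mem_iUnion.2 ⟨y, hyV y⟩)
  have hUopen : IsOpen (⋂ y ∈ t, U y) := isOpen_biInter_finset fun y _ => hU y
  have hxmem : x ∈ ⋂ y ∈ t, U y := Set.mem_iInter₂.2 fun y _ => hxU y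
  filter_upwards [hUopen.mem_nhds hxmem] with x' hx'
  refine lt_of_lt_of_le hcc' (le_iInf fun y => ?_)
  obtain ⟨y0, hy0t, hy0⟩ := Set.mem_iUnion₂.1 (ht (Set.mem_univ y))
  exact le_of_lt (hgt y0 (x', y) ⟨Set.mem_iInter₂.1 hx' y0 hy0t, hy0⟩)
end

section
/- Let a : ℕ → EReal satisfy a_n ≠ −∞ for all n ≥ 1 and the subadditivity a_{n+m} ≤ a_n + a_m for all n, m ≥ 1. Then: (i) liminf_{n→∞} a_n/n = ⨅_{n≥1} a_n/n; and (ii) the following are equivalent: (1) a_n = +∞ for all n ≥ 1, or there exists n₀ such that a_n < +∞ for all n ≥ n₀; (2) a_n = +∞ for all n ≥ 1, or there exists k ≥ 1 with a_k < +∞ and a_{k+1} < +∞; (3) a_n = +∞ for all n ≥ 1, or there exist coprime k, m ≥ 1 with a_k < +∞ and a_m < +∞; (4) the sequence (a_n/n)_{n≥1} converges in EReal (necessarily to ⨅_{n≥1} a_n/n). -/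
open Filter Topology


private lemma fekete_real_tendsto (x y c r m : ℝ) (hm : 0 < m) :
    Tendsto (fun k : ℕ => (((k:ℝ) - c) * x + y) / ((k:ℝ) * m + r)) atTop (𝓝 (x / m)) := by
  have A : Tendsto (fun t : ℝ => ((1 - c / t) * x + y / t) / (m + r / t)) atTop
      (𝓝 (((1 - 0) * x + 0) / (m + 0))) := by
    refine Tendsto.div ?_ ?_ (by simpa using hm.ne')
    · exact (((tendsto_const_nhds.sub (tendsto_const_nhds.div_atTop tendsto_id)).mul
        tendsto_const_nhds).add (tendsto_const_nhds.div_atTop tendsto_id))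
    · exact tendsto_const_nhds.add (tendsto_const_nhds.div_atTop tendsto_id)
  have C : Tendsto (fun t : ℝ => ((t - c) * x + y) / (t * m + r)) atTop (𝓝 (x / m)) := by
    have h : ((1 - 0 : ℝ) * x + 0) / (m + 0) = x / m := by ring_nf
    rw [h] at A
    refine A.congr' <| (eventually_ne_atTop 0).mono fun t ht => ?_
    rw [show (1 - c / t) * x + y / t = ((t - c) * x + y) / t by field_simp; try ring,
      show m + r / t = (t * m + r) / t by field_simp; try ring,
      div_div_div_cancel_right₀ ht]
  exact C.comp tendsto_natCast_atTop_atTop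

private lemma fekete_nat_mul_lt_top {x : EReal} (hx : x ≠ ⊤) (k : ℕ) : (k : EReal) * x < ⊤ := by
  rcases eq_or_ne x ⊥ with rfl | hb
  · rcases Nat.eq_zero_or_pos k with rfl | hk
    · simp
    · rw [EReal.mul_bot_of_pos (by exact_mod_cast Nat.cast_pos.2 hk)]
      exact bot_lt_top
  · lift x to ℝ using ⟨hx, hb⟩
    rw [← EReal.coe_coe_eq_natCast, ← EReal.coe_mul]
    exact EReal.coe_lt_top _

section aux
variable {a : ℕ → EReal}

private lemma fekete_mul_le (hsub : ∀ n m, 1 ≤ n → 1 ≤ m → a (n + m) ≤ a n + a m)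
    (m : ℕ) (hm : 1 ≤ m) : ∀ k, 1 ≤ k → a (k * m) ≤ (k : EReal) * a m := by
  intro k hk
  induction k, hk using Nat.le_induction with
  | base => simp [one_mul]
  | succ k hk ih =>
    have h1 : a ((k + 1) * m) ≤ a (k * m) + a m := by
      rw [add_mul, one_mul]
      exact hsub _ _ (le_trans hm (Nat.le_mul_of_pos_left m hk)) hm
    refine h1.trans <| (add_le_add ih le_rfl).trans ?_
    rcases eq_or_ne (a m) ⊤ with h | h
    · rw [h]
      have hkp : (0:EReal) < (k:EReal) := by exact_mod_cast Nat.cast_pos.2 hk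
      rw [EReal.mul_top_of_pos hkp,
        EReal.mul_top_of_pos (by exact_mod_cast Nat.cast_pos.2 (Nat.succ_pos k))]
      simp
    · rcases eq_or_ne (a m) ⊥ with h' | h'
      · have hkp : (0:EReal) < (k:EReal) := by exact_mod_cast Nat.cast_pos.2 hk
        rw [h', EReal.mul_bot_of_pos hkp,
          EReal.mul_bot_of_pos (by exact_mod_cast Nat.cast_pos.2 (Nat.succ_pos k))]
        simp
      · lift a m to ℝ using ⟨h, h'⟩ with x
        rw [← EReal.coe_coe_eq_natCast, ← EReal.coe_coe_eq_natCast, ← EReal.coe_mul,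
          ← EReal.coe_mul, ← EReal.coe_add]
        norm_cast
        push_cast
        ring_nf
        exact le_refl _

private lemma fekete_div_mul_le (hsub : ∀ n m, 1 ≤ n → 1 ≤ m → a (n + m) ≤ a n + a m)
    {m k : ℕ} (hm : 1 ≤ m) (hk : 1 ≤ k) :
    a (k * m) / ((k * m : ℕ) : EReal) ≤ a m / (m : EReal) := by
  have h1 : a (k * m) / ((k*m:ℕ) : EReal) ≤ ((k:EReal) * a m) / ((k*m:ℕ) : EReal) :=
    EReal.div_le_div_right_of_nonneg (by exact_mod_cast Nat.zero_le _)
      (fekete_mul_le hsub m hm k hk)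
  refine h1.trans_eq ?_
  have hk0 : (k:EReal) ≠ 0 := (by exact_mod_cast Nat.cast_pos.2 hk : (0:EReal) < k).ne'
  rw [EReal.natCast_mul, EReal.mul_comm (k:EReal) (a m), mul_comm (k:EReal) (m:EReal),
    EReal.mul_div_mul_cancel (EReal.natCast_ne_bot k) (EReal.natCast_ne_top k) hk0]

private lemma fekete_liminf_eq (hsub : ∀ n m, 1 ≤ n → 1 ≤ m → a (n + m) ≤ a n + a m) :
    Filter.liminf (fun n : ℕ => a n / (n : EReal)) Filter.atTop
        = ⨅ n ∈ Set.Ici 1, a n / (n : EReal) := by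
  apply le_antisymm
  · refine le_iInf₂ fun m hm => ?_
    refine liminf_le_of_frequently_le' ?_
    rw [frequently_atTop]
    intro N
    refine ⟨max N 1 * m, le_trans (le_max_left N 1) (Nat.le_mul_of_pos_right _ hm), ?_⟩
    exact fekete_div_mul_le hsub hm (le_max_right N 1)
  · refine le_liminf_of_le (by isBoundedDefault) ?_
    filter_upwards [eventually_ge_atTop 1] with n hn
    exact iInf₂_le n hn

private lemma fekete_limsup_le (hbot : ∀ n, 1 ≤ n → a n ≠ ⊥)
    (hsub : ∀ n m, 1 ≤ n → 1 ≤ m → a (n + m) ≤ a n + a m)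
    {n₀ : ℕ} (hn₀ : 1 ≤ n₀) (htop : ∀ n, n₀ ≤ n → a n ≠ ⊤)
    {m : ℕ} (hm : 1 ≤ m) :
    Filter.limsup (fun n : ℕ => a n / (n : EReal)) Filter.atTop ≤ a m / (m : EReal) := by
  have hmR : (0:ℝ) < (m:ℝ) := by exact_mod_cast hm
  rcases eq_or_ne (a m) ⊤ with hT | hT
  · rw [hT, EReal.top_div_of_pos_ne_top (by exact_mod_cast Nat.cast_pos.2 hm)
      (EReal.natCast_ne_top m)]
    exact le_top
  lift a m to ℝ using ⟨hT, hbot m hm⟩ with x hx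
  by_contra hcon
  push_neg at hcon
  obtain ⟨b, hb1, hb2⟩ := EReal.exists_between_coe_real hcon
  have hxm : ((x:EReal) / (m:EReal)) = (((x / m : ℝ)):EReal) := by
    rw [← EReal.coe_coe_eq_natCast, ← EReal.coe_div]
  have hb1' : x / (m:ℝ) < b := by
    rw [hxm] at hb1; exact_mod_cast hb1
  have ev : ∀ᶠ n in atTop, a n / (n : EReal) ≤ (b : EReal) := by
    refine Eventually.atTop_of_arithmetic (by omega : m ≠ 0) fun r hr => ?_
    obtain ⟨c, hcdef⟩ : ∃ c, c = n₀ + 1 := ⟨_, rfl⟩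
    obtain ⟨r', hr'def⟩ : ∃ r', r' = r + c * m := ⟨_, rfl⟩
    have hr'n₀ : n₀ ≤ r' := by
      have : c ≤ c * m := Nat.le_mul_of_pos_right c hm
      omega
    have hr'1 : 1 ≤ r' := le_trans hn₀ hr'n₀
    lift a r' to ℝ using ⟨htop r' hr'n₀, hbot r' hr'1⟩ with y hy
    have lim := fekete_real_tendsto x y (c:ℝ) (r:ℝ) (m:ℝ) hmR
    filter_upwards [lim.eventually (gt_mem_nhds hb1'), eventually_ge_atTop (c+1)]
      with k hfk hk
    rw [mul_comm m k]
    obtain ⟨j, rfl⟩ : ∃ j, k = j + c := ⟨k - c, by omega⟩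
    have hj : 1 ≤ j := by omega
    have hrew : (j + c) * m + r = j * m + r' := by rw [hr'def]; ring
    have key : a ((j + c) * m + r) ≤ ((j : ℝ) * x + y : ℝ) := by
      rw [hrew]
      calc a (j * m + r') ≤ a (j * m) + a r' :=
            hsub _ _ (le_trans hm (Nat.le_mul_of_pos_left m hj)) hr'1
        _ ≤ (j : EReal) * (x : EReal) + (y : EReal) := by
            rw [hy]; exact add_le_add (hx ▸ fekete_mul_le hsub m hm j hj) le_rfl
        _ = (((j:ℝ) * x + y : ℝ) : EReal) := by
            rw [← EReal.coe_coe_eq_natCast]; norm_cast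
    have hdiv : a ((j + c) * m + r) / (((j + c) * m + r : ℕ) : EReal)
        ≤ ((((j:ℝ) * x + y) / (((j + c) * m + r : ℕ) : ℝ) : ℝ) : EReal) := by
      rw [EReal.coe_div, EReal.coe_coe_eq_natCast]
      exact EReal.div_le_div_right_of_nonneg (by exact_mod_cast Nat.zero_le _) key
    refine hdiv.trans ?_
    rw [EReal.coe_le_coe_iff]
    have harg : (((j + c) * m + r : ℕ) : ℝ) = ((j + c : ℕ):ℝ) * (m:ℝ) + (r:ℝ) := by
      push_cast; ring
    have hnum : ((j:ℝ)) = ((j + c : ℕ):ℝ) - (c:ℝ) := by push_cast; ring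
    rw [harg, hnum]
    exact le_of_lt hfk
  have : Filter.limsup (fun n : ℕ => a n / (n : EReal)) Filter.atTop ≤ (b : EReal) :=
    limsup_le_of_le (by isBoundedDefault) ev
  exact absurd (lt_of_lt_of_le hb2 this) (lt_irrefl _)

private lemma fekete_tail (hbot : ∀ n, 1 ≤ n → a n ≠ ⊥)
    (hsub : ∀ n m, 1 ≤ n → 1 ≤ m → a (n + m) ≤ a n + a m)
    {k m : ℕ} (hk : 1 ≤ k) (hm : 1 ≤ m) (cop : Nat.Coprime k m)
    (hak : a k < ⊤) (ham : a m < ⊤) :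
    ∃ n₀, ∀ n, n₀ ≤ n → a n < ⊤ := by
  have bound : ∀ n i j : ℕ, n = i * k + j * m → 1 ≤ n → a n < ⊤ := by
    intro n i j hn h1
    rcases Nat.eq_zero_or_pos i with rfl | hi
    · rcases Nat.eq_zero_or_pos j with rfl | hj
      · omega
      · have : a n ≤ (j : EReal) * a m := by
          rw [hn]; simpa using fekete_mul_le hsub m hm j hj
        exact lt_of_le_of_lt this (fekete_nat_mul_lt_top ham.ne j)
    · rcases Nat.eq_zero_or_pos j with rfl | hj
      · have : a n ≤ (i : EReal) * a k := by
          rw [hn]; simpa using fekete_mul_le hsub k hk i hi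
        exact lt_of_le_of_lt this (fekete_nat_mul_lt_top hak.ne i)
      · have h2 : a n ≤ a (i * k) + a (j * m) := by
          rw [hn]
          exact hsub _ _ (le_trans hk (Nat.le_mul_of_pos_left k hi))
            (le_trans hm (Nat.le_mul_of_pos_left m hj))
        have h3 : a (i * k) + a (j * m) ≤ (i : EReal) * a k + (j : EReal) * a m :=
          add_le_add (fekete_mul_le hsub k hk i hi) (fekete_mul_le hsub m hm j hj)
        refine lt_of_le_of_lt (h2.trans h3) (EReal.add_lt_top ?_ ?_)
        · exact (fekete_nat_mul_lt_top hak.ne i).ne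
        · exact (fekete_nat_mul_lt_top ham.ne j).ne
  rcases eq_or_lt_of_le hk with rfl | hk1
  · exact ⟨1, fun n hn => bound n n 0 (by omega) hn⟩
  rcases eq_or_lt_of_le hm with rfl | hm1
  · exact ⟨1, fun n hn => bound n 0 n (by omega) hn⟩
  refine ⟨k * m, fun n hn => ?_⟩
  have hkm : 1 ≤ k * m := le_trans hk (Nat.le_mul_of_pos_right k hm)
  have hfrob := frobeniusNumber_pair cop hk1 hm1
  have hmem : n ∈ AddSubmonoid.closure ({k, m} : Set ℕ) := by
    by_contra hmem
    have h2 := hfrob.2 hmem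
    have hlt : k * m - k - m < k * m :=
      lt_of_le_of_lt (Nat.sub_le _ m) (Nat.sub_lt hkm hk)
    exact absurd (le_trans hn h2) (not_le.2 hlt)
  rw [AddSubmonoid.mem_closure_pair] at hmem
  obtain ⟨i, j, hij⟩ := hmem
  refine bound n i j ?_ (le_trans hkm hn)
  simp only [smul_eq_mul] at hij
  exact hij.symm

end aux


/-- **Fekete's lemma for `EReal`-valued subadditive sequences.**
Let `a : ℕ → EReal` satisfy `a n ≠ ⊥` for all `n ≥ 1` and the subadditivity
`a (n + m) ≤ a n + a m` for all `n, m ≥ 1`. Then: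
(i) `liminf_{n → ∞} a n / n = ⨅_{n ≥ 1} a n / n`; and
(ii) the following are equivalent:
(1) `a n = ⊤` for all `n ≥ 1`, or there exists `n₀` such that `a n < ⊤` for all `n ≥ n₀`;
(2) `a n = ⊤` for all `n ≥ 1`, or there exists `k ≥ 1` with `a k < ⊤` and `a (k+1) < ⊤`;
(3) `a n = ⊤` for all `n ≥ 1`, or there exist coprime `k, m ≥ 1` with `a k < ⊤` and `a m < ⊤`;
(4) the sequence `(a n / n)_{n ≥ 1}` converges in `EReal`. -/
theorem ereal_fekete (a : ℕ → EReal)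
    (hbot : ∀ n, 1 ≤ n → a n ≠ ⊥)
    (hsub : ∀ n m, 1 ≤ n → 1 ≤ m → a (n + m) ≤ a n + a m) :
    (Filter.liminf (fun n : ℕ => a n / (n : EReal)) Filter.atTop
        = ⨅ n ∈ Set.Ici 1, a n / (n : EReal))
    ∧ List.TFAE
        [ (∀ n, 1 ≤ n → a n = ⊤) ∨ ∃ n₀, ∀ n, n₀ ≤ n → a n < ⊤,
          (∀ n, 1 ≤ n → a n = ⊤) ∨ ∃ k, 1 ≤ k ∧ a k < ⊤ ∧ a (k + 1) < ⊤,
          (∀ n, 1 ≤ n → a n = ⊤) ∨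
            ∃ k m, 1 ≤ k ∧ 1 ≤ m ∧ Nat.Coprime k m ∧ a k < ⊤ ∧ a m < ⊤,
          ∃ L : EReal,
            Filter.Tendsto (fun n : ℕ => a n / (n : EReal)) Filter.atTop (nhds L) ] := by
  refine ⟨fekete_liminf_eq hsub, ?_⟩
  tfae_have 1 → 2 := by
    rintro (h | ⟨n₀, h⟩)
    · exact Or.inl h
    · exact Or.inr ⟨max n₀ 1, le_max_right _ _, h _ (le_max_left _ _),
        h _ (le_trans (le_max_left _ _) (Nat.le_succ _))⟩
  tfae_have 2 → 3 := by
    rintro (h | ⟨k, hk, h1, h2⟩)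
    · exact Or.inl h
    · exact Or.inr ⟨k, k + 1, hk, by omega, by simp, h1, h2⟩
  tfae_have 3 → 1 := by
    rintro (h | ⟨k, m, hk, hm, cop, h1, h2⟩)
    · exact Or.inl h
    · exact Or.inr (fekete_tail hbot hsub hk hm cop h1 h2)
  tfae_have 1 → 4 := by
    rintro (h | ⟨n₀, h⟩)
    · refine ⟨⊤, tendsto_const_nhds.congr' ?_⟩
      filter_upwards [eventually_ge_atTop 1] with n hn
      rw [h n hn, EReal.top_div_of_pos_ne_top (by exact_mod_cast Nat.cast_pos.2 hn)
        (EReal.natCast_ne_top n)]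
    · refine ⟨⨅ n ∈ Set.Ici 1, a n / (n : EReal), ?_⟩
      have htop : ∀ n, max n₀ 1 ≤ n → a n ≠ ⊤ :=
        fun n hn => (h n (le_trans (le_max_left _ _) hn)).ne
      refine tendsto_of_le_liminf_of_limsup_le ?_ ?_
      · exact (fekete_liminf_eq hsub).ge
      · exact le_iInf₂ fun m hm =>
          fekete_limsup_le hbot hsub (le_max_right n₀ 1) htop hm
  tfae_have 4 → 1 := by
    rintro ⟨L, hL⟩
    by_contra hcon
    push_neg at hcon
    obtain ⟨hc1, hc2⟩ := hcon
    obtain ⟨N, hN1, hNne⟩ := hc1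
    have hLtop : L = ⊤ := by
      have freq : ∃ᶠ n in atTop, (⊤:EReal) ≤ a n / (n : EReal) := by
        rw [frequently_atTop]
        intro M
        obtain ⟨n, hn, htop⟩ := hc2 (max M 1)
        refine ⟨n, le_trans (le_max_left _ _) hn, ?_⟩
        have hn1 : 1 ≤ n := le_trans (le_max_right _ _) hn
        rw [top_le_iff.1 htop, EReal.top_div_of_pos_ne_top
          (by exact_mod_cast Nat.cast_pos.2 hn1) (EReal.natCast_ne_top n)]
      have := le_limsup_of_frequently_le' freq
      rw [hL.limsup_eq] at this
      exact top_le_iff.1 this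
    have hLle : L ≤ a N / (N : EReal) := by
      have freq : ∃ᶠ n in atTop, a n / (n : EReal) ≤ a N / (N : EReal) := by
        rw [frequently_atTop]
        intro M
        exact ⟨max M 1 * N, le_trans (le_max_left M 1) (Nat.le_mul_of_pos_right _ hN1),
          fekete_div_mul_le hsub hN1 (le_max_right M 1)⟩
      have := liminf_le_of_frequently_le' freq
      rwa [hL.liminf_eq] at this
    lift a N to ℝ using ⟨hNne, hbot N hN1⟩ with x hx
    rw [hLtop, ← EReal.coe_coe_eq_natCast, ← EReal.coe_div] at hLle
    exact absurd hLle (EReal.coe_lt_top _).not_ge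
  tfae_finish
end

section
/- For all positive definite n×n complex matrices ρ, σ and all γ₁, γ₂ ∈ (0,1): (σ #_{γ₂} ρ) #_{γ₁} ρ = σ #_{1−(1−γ₁)(1−γ₂)} ρ. (Note that σ #_{γ₂} ρ is again positive definite, so the left-hand side is well defined.) -/
open Matrix
open scoped ComplexOrder

/-- Functional calculus for Hermitian matrices: apply `f : ℝ → ℝ` to the eigenvalues
in a spectral decomposition (and return `0` on non-Hermitian input). -/
noncomputable def mfun {ι : Type*} [Fintype ι] [DecidableEq ι]
    (f : ℝ → ℝ) (A : Matrix ι ι ℂ) : Matrix ι ι ℂ :=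
  letI := Classical.propDecidable A.IsHermitian
  if hA : A.IsHermitian then hA.cfc f else 0

/-- Real matrix power `A ^ γ` via functional calculus (with `Real.rpow` on eigenvalues,
so that `0 ^ γ = 0` for `γ ≠ 0`, giving the generalized inverse for `γ = -1`). -/
noncomputable def mpow {ι : Type*} [Fintype ι] [DecidableEq ι]
    (A : Matrix ι ι ℂ) (γ : ℝ) : Matrix ι ι ℂ :=
  mfun (fun x => x ^ γ) A

/-- The `γ`-weighted geometric mean
`σ #_γ ρ := σ^{1/2} · (σ^{-1/2} · ρ · σ^{-1/2})^γ · σ^{1/2}`. -/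
noncomputable def geomMean {ι : Type*} [Fintype ι] [DecidableEq ι]
    (σ ρ : Matrix ι ι ℂ) (γ : ℝ) : Matrix ι ι ℂ :=
  mpow σ (1 / 2) * mpow (mpow σ (-(1 / 2)) * ρ * mpow σ (-(1 / 2))) γ * mpow σ (1 / 2)

variable {ι : Type*} [Fintype ι] [DecidableEq ι]

lemma mfun_eq_cfc {A : Matrix ι ι ℂ} (hA : A.IsHermitian) (f : ℝ → ℝ) :
    mfun f A = cfc f A := by
  rw [mfun, dif_pos hA, hA.cfc_eq]

lemma mpow_eq_cfc {A : Matrix ι ι ℂ} (hA : A.IsHermitian) (γ : ℝ) :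
    mpow A γ = cfc (fun x : ℝ => x ^ γ) A :=
  mfun_eq_cfc hA _

lemma Matrix.PosDef.spectrum_pos {A : Matrix ι ι ℂ} (hA : A.PosDef) :
    ∀ x ∈ spectrum ℝ A, 0 < x := by
  rw [hA.isHermitian.spectrum_real_eq_range_eigenvalues]
  rintro x ⟨i, rfl⟩
  exact hA.eigenvalues_pos i

lemma contOn (f : ℝ → ℝ) (A : Matrix ι ι ℂ) : ContinuousOn f (spectrum ℝ A) :=
  (Matrix.finite_real_spectrum (A := A)).continuousOn f

lemma posDef_conj {A B : Matrix ι ι ℂ} (hA : A.PosDef) (hB : IsUnit B) :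
    (Bᴴ * A * B).PosDef := by
  refine Matrix.PosDef.of_dotProduct_mulVec_pos (Matrix.isHermitian_conjTranspose_mul_mul _ hA.isHermitian) fun x hx => ?_
  have hBx : B *ᵥ x ≠ 0 := by
    intro h
    exact hx <| (Matrix.mulVec_injective_iff_isUnit.mpr hB).eq_iff' (by simp) |>.mp h
  have := hA.dotProduct_mulVec_pos hBx
  rw [Matrix.mul_assoc, ← Matrix.mulVec_mulVec, Matrix.dotProduct_mulVec,
    ← Matrix.star_mulVec, ← Matrix.mulVec_mulVec]
  exact this

lemma cfc_posDef {A : Matrix ι ι ℂ} (hA : A.PosDef) {f : ℝ → ℝ}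
    (hf : ∀ x ∈ spectrum ℝ A, 0 < f x) : (cfc f A).PosDef := by
  rw [hA.isHermitian.cfc_eq, Matrix.IsHermitian.cfc]
  set U : Matrix ι ι ℂ := (Matrix.IsHermitian.eigenvectorUnitary hA.isHermitian : Matrix ι ι ℂ)
  have hU : IsUnit (star U) := isUnit_iff_exists.mpr
    ⟨U, Unitary.coe_star_mul_self hA.isHermitian.eigenvectorUnitary,
      Unitary.coe_mul_star_self hA.isHermitian.eigenvectorUnitary⟩
  have hD : (Matrix.diagonal (RCLike.ofReal ∘ f ∘ hA.isHermitian.eigenvalues) :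
      Matrix ι ι ℂ).PosDef := by
    rw [Matrix.posDef_diagonal_iff]
    intro i
    have : 0 < f (hA.isHermitian.eigenvalues i) :=
      hf _ (hA.isHermitian.eigenvalues_mem_spectrum_real i)
    exact RCLike.ofReal_pos.mpr this
  have := posDef_conj hD hU
  simpa [Matrix.star_eq_conjTranspose] using this

lemma mpow_posDef {A : Matrix ι ι ℂ} (hA : A.PosDef) (γ : ℝ) : (mpow A γ).PosDef := by
  rw [mpow_eq_cfc hA.isHermitian]
  exact cfc_posDef hA fun x hx => Real.rpow_pos_of_pos (hA.spectrum_pos x hx) γ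

lemma mpow_isHermitian {A : Matrix ι ι ℂ} (hA : A.PosDef) (γ : ℝ) :
    (mpow A γ).IsHermitian := (mpow_posDef hA γ).isHermitian

lemma mpow_mul_mpow {A : Matrix ι ι ℂ} (hA : A.PosDef) (a b : ℝ) :
    mpow A a * mpow A b = mpow A (a + b) := by
  rw [mpow_eq_cfc hA.isHermitian, mpow_eq_cfc hA.isHermitian, mpow_eq_cfc hA.isHermitian,
    ← cfc_mul _ _ A ((Matrix.finite_real_spectrum (A := A)).continuousOn _)
      ((Matrix.finite_real_spectrum (A := A)).continuousOn _)]
  exact cfc_congr fun x hx => (Real.rpow_add (hA.spectrum_pos x hx) a b).symm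

lemma mpow_zero {A : Matrix ι ι ℂ} (hA : A.IsHermitian) : mpow A 0 = 1 := by
  rw [mpow_eq_cfc hA]
  have : cfc (fun x : ℝ => x ^ (0 : ℝ)) A = cfc (fun _ : ℝ => (1 : ℝ)) A :=
    cfc_congr fun x _ => Real.rpow_zero x
  rw [this, cfc_const_one ℝ A]

lemma mpow_one {A : Matrix ι ι ℂ} (hA : A.IsHermitian) : mpow A 1 = A := by
  rw [mpow_eq_cfc hA]
  have : cfc (fun x : ℝ => x ^ (1 : ℝ)) A = cfc (fun x : ℝ => x) A :=
    cfc_congr fun x _ => Real.rpow_one x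
  rw [this, cfc_id' ℝ A]

lemma mpow_mpow {A : Matrix ι ι ℂ} (hA : A.PosDef) (a b : ℝ) :
    mpow (mpow A a) b = mpow A (a * b) := by
  rw [mpow_eq_cfc (mpow_isHermitian hA a), mpow_eq_cfc hA.isHermitian,
    mpow_eq_cfc hA.isHermitian]
  calc cfc (fun x : ℝ => x ^ b) (cfc (fun x : ℝ => x ^ a) A)
      = cfc ((fun x : ℝ => x ^ b) ∘ (fun x : ℝ => x ^ a)) A :=
        (cfc_comp (fun x : ℝ => x ^ b) (fun x : ℝ => x ^ a) A hA.isHermitian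
          (((spectrum ℝ A).toFinite.image _).continuousOn _)
          ((Matrix.finite_real_spectrum (A := A)).continuousOn _)).symm
    _ = cfc (fun x : ℝ => x ^ (a * b)) A := cfc_congr fun x hx => by
        simp only [Function.comp_apply]
        rw [← Real.rpow_mul (hA.spectrum_pos x hx).le]

lemma mpow_inv {A : Matrix ι ι ℂ} (hA : A.PosDef) : A⁻¹ = mpow A (-1) := by
  apply Matrix.inv_eq_right_inv
  calc A * mpow A (-1) = mpow A 1 * mpow A (-1) := by rw [mpow_one hA.isHermitian]
  _ = mpow A 0 := by rw [mpow_mul_mpow hA]; norm_num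
  _ = 1 := mpow_zero hA.isHermitian

lemma aeval_units_conj (u : (Matrix ι ι ℂ)ˣ) (A : Matrix ι ι ℂ) (p : Polynomial ℝ) :
    Polynomial.aeval ((u : Matrix ι ι ℂ) * A * (↑u⁻¹ : Matrix ι ι ℂ)) p
      = (u : Matrix ι ι ℂ) * Polynomial.aeval A p * (↑u⁻¹ : Matrix ι ι ℂ) := by
  induction p using Polynomial.induction_on' with
  | add p q hp hq =>
      rw [map_add, map_add, hp, hq, mul_add, add_mul]
  | monomial k c =>
      rw [Polynomial.aeval_monomial, Polynomial.aeval_monomial, Units.conj_pow]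
      rw [← mul_assoc, ← mul_assoc]
      congr 1
      rw [Algebra.commutes c (u : Matrix ι ι ℂ), mul_assoc]

lemma cfc_units_conj (f : ℝ → ℝ) (u : (Matrix ι ι ℂ)ˣ) {A : Matrix ι ι ℂ}
    (hA : A.IsHermitian)
    (hB : ((u : Matrix ι ι ℂ) * A * (↑u⁻¹ : Matrix ι ι ℂ)).IsHermitian) :
    cfc f ((u : Matrix ι ι ℂ) * A * (↑u⁻¹ : Matrix ι ι ℂ))
      = (u : Matrix ι ι ℂ) * cfc f A * (↑u⁻¹ : Matrix ι ι ℂ) := by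
  set B := (u : Matrix ι ι ℂ) * A * (↑u⁻¹ : Matrix ι ι ℂ) with hBdef
  have hfin : (spectrum ℝ A ∪ spectrum ℝ B).Finite :=
    (Matrix.finite_real_spectrum (A := A)).union (Matrix.finite_real_spectrum (A := B))
  set s : Finset ℝ := hfin.toFinset with hs
  set p : Polynomial ℝ := Lagrange.interpolate s id f with hpdef
  have hp : ∀ x ∈ s, p.eval x = f x := fun x hx =>
    Lagrange.eval_interpolate_at_node f (Set.injOn_id _) hx
  have h1 : cfc f A = Polynomial.aeval A p := by
    rw [← cfc_polynomial p A hA]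
    exact cfc_congr fun x hx =>
      (hp x (hfin.mem_toFinset.mpr (Set.mem_union_left _ hx))).symm
  have h2 : cfc f B = Polynomial.aeval B p := by
    rw [← cfc_polynomial p B hB]
    exact cfc_congr fun x hx =>
      (hp x (hfin.mem_toFinset.mpr (Set.mem_union_right _ hx))).symm
  rw [h1, h2, hBdef, aeval_units_conj]

lemma mpow_mul_mpow' {A : Matrix ι ι ℂ} (hA : A.PosDef) {a b c : ℝ} (h : a + b = c) :
    mpow A a * mpow A b = mpow A c := by rw [mpow_mul_mpow hA, h]

lemma mpow_mpow' {A : Matrix ι ι ℂ} (hA : A.PosDef) {a b c : ℝ} (h : a * b = c) :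
    mpow (mpow A a) b = mpow A c := by rw [mpow_mpow hA, h]

lemma mpow_units_conj {A B : Matrix ι ι ℂ} (hA : A.PosDef) (hB : B.IsHermitian)
    (u : (Matrix ι ι ℂ)ˣ) (h : (u : Matrix ι ι ℂ) * A * (↑u⁻¹ : Matrix ι ι ℂ) = B) (γ : ℝ) :
    mpow B γ = (u : Matrix ι ι ℂ) * mpow A γ * (↑u⁻¹ : Matrix ι ι ℂ) := by
  rw [mpow_eq_cfc hB, mpow_eq_cfc hA.isHermitian, ← h]
  exact cfc_units_conj _ u hA.isHermitian (h ▸ hB)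


lemma geomMean_symm {ρ σ : Matrix ι ι ℂ} (hσ : σ.PosDef) (hρ : ρ.PosDef) (γ : ℝ) :
    geomMean σ ρ γ = geomMean ρ σ (1 - γ) := by
  set s := mpow σ (1 / 2) with hs
  set s' := mpow σ (-(1 / 2)) with hs'
  set r := mpow ρ (1 / 2) with hr
  set r' := mpow ρ (-(1 / 2)) with hr'
  have hspd := mpow_posDef hσ (1 / 2)
  have hs'pd := mpow_posDef hσ (-(1 / 2))
  have hrpd := mpow_posDef hρ (1 / 2)
  have hr'pd := mpow_posDef hρ (-(1 / 2))
  have hss' : s * s' = 1 := by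
    rw [hs, hs', mpow_mul_mpow' hσ (c := 0) (by norm_num), mpow_zero hσ.isHermitian]
  have hs's : s' * s = 1 := by
    rw [hs, hs', mpow_mul_mpow' hσ (c := 0) (by norm_num), mpow_zero hσ.isHermitian]
  have hs's' : s' * s' = mpow σ (-1) := by
    rw [hs', mpow_mul_mpow' hσ (c := -1) (by norm_num)]
  have hrr : r * r = ρ := by
    rw [hr, mpow_mul_mpow' hρ (c := 1) (by norm_num), mpow_one hρ.isHermitian]
  have hrr' : r * r' = 1 := by
    rw [hr, hr', mpow_mul_mpow' hρ (c := 0) (by norm_num), mpow_zero hρ.isHermitian]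
  have hr'r : r' * r = 1 := by
    rw [hr, hr', mpow_mul_mpow' hρ (c := 0) (by norm_num), mpow_zero hρ.isHermitian]
  set X := s' * r with hX
  set XH := r * s' with hXH
  have hXunit : IsUnit X := hs'pd.isUnit.mul hrpd.isUnit
  set u : (Matrix ι ι ℂ)ˣ := hXunit.unit with hu
  have huX : (u : Matrix ι ι ℂ) = X := hXunit.unit_spec
  have hXinv : X * (↑u⁻¹ : Matrix ι ι ℂ) = 1 := by rw [← huX]; exact u.mul_inv
  have hinvX : (↑u⁻¹ : Matrix ι ι ℂ) * X = 1 := by rw [← huX]; exact u.inv_mul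
  set T := s' * ρ * s' with hT
  set C := r * mpow σ (-1) * r with hC
  have hTpd : T.PosDef := by
    have := posDef_conj hρ hs'pd.isUnit
    rwa [(mpow_isHermitian hσ _).eq] at this
  have hCpd : C.PosDef := by
    have := posDef_conj (mpow_posDef hσ (-1)) hrpd.isUnit
    rwa [(mpow_isHermitian hρ _).eq] at this
  have hXXH : X * XH = T := by
    rw [hX, hXH, hT, ← hrr]
    simp only [← mul_assoc]
  have hXHX : XH * X = C := by
    rw [hX, hXH, hC, ← hs's']
    simp only [← mul_assoc]
  have hconj : (u : Matrix ι ι ℂ) * C * (↑u⁻¹ : Matrix ι ι ℂ) = T := by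
    have hXC : X * C = T * X := by
      rw [← hXHX, ← hXXH]
      simp only [← mul_assoc]
    rw [huX, hXC, mul_assoc, hXinv, mul_one]
  have e1 : mpow T (γ - 1) = X * mpow C (γ - 1) * (↑u⁻¹ : Matrix ι ι ℂ) := by
    rw [← huX]
    exact mpow_units_conj hCpd hTpd.isHermitian u hconj (γ - 1)
  have e2 : mpow T (γ - 1) * T = mpow T γ := by
    calc mpow T (γ - 1) * T = mpow T (γ - 1) * mpow T 1 := by
          rw [mpow_one hTpd.isHermitian]
      _ = mpow T γ := mpow_mul_mpow' hTpd (c := γ) (by ring)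
  have e3 : X * mpow C (γ - 1) * XH = mpow T γ := by
    have h4 : X * mpow C (γ - 1) * XH
        = (X * mpow C (γ - 1) * (↑u⁻¹ : Matrix ι ι ℂ)) * (X * XH) := by
      rw [← mul_assoc (X * mpow C (γ - 1) * (↑u⁻¹ : Matrix ι ι ℂ)) X XH,
        mul_assoc (X * mpow C (γ - 1)) (↑u⁻¹ : Matrix ι ι ℂ) X, hinvX, mul_one]
    rw [h4, ← e1, hXXH, e2]
  -- relate S to C
  set S := r' * σ * r' with hS
  have hσinv : σ * mpow σ (-1) = 1 := by
    calc σ * mpow σ (-1) = mpow σ 1 * mpow σ (-1) := by rw [mpow_one hσ.isHermitian]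
      _ = mpow σ 0 := mpow_mul_mpow' hσ (c := 0) (by norm_num)
      _ = 1 := mpow_zero hσ.isHermitian
  have hSC : S * C = 1 := by
    rw [hS, hC]
    simp only [← mul_assoc]
    rw [mul_assoc (r' * σ) r' r, hr'r, mul_one, mul_assoc r' σ (mpow σ (-1)), hσinv,
      mul_one, hr'r]
  have hSeq : S = mpow C (-1) := by
    rw [← mpow_inv hCpd]
    exact (Matrix.inv_eq_left_inv hSC).symm
  have hmpowS : mpow S (1 - γ) = mpow C (γ - 1) := by
    rw [hSeq]
    exact mpow_mpow' hCpd (by ring)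
  have hsX : s * X = r := by rw [hX, ← mul_assoc, hss', one_mul]
  have hXHs : XH * s = r := by rw [hXH, mul_assoc, hs's, mul_one]
  simp only [geomMean]
  rw [← hs, ← hs', ← hr, ← hr', ← hT, ← hS, hmpowS]
  calc s * mpow T γ * s = s * (X * mpow C (γ - 1) * XH) * s := by rw [e3]
    _ = (s * X) * mpow C (γ - 1) * (XH * s) := by simp only [← mul_assoc]
    _ = r * mpow C (γ - 1) * r := by rw [hsX, hXHs]

lemma geomMean_posDef {ρ σ : Matrix ι ι ℂ} (hσ : σ.PosDef) (hρ : ρ.PosDef) (γ : ℝ) :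
    (geomMean σ ρ γ).PosDef := by
  have hs'pd := mpow_posDef hσ (-(1 / 2))
  have hspd := mpow_posDef hσ (1 / 2)
  have hTpd : (mpow σ (-(1 / 2)) * ρ * mpow σ (-(1 / 2))).PosDef := by
    have := posDef_conj hρ hs'pd.isUnit
    rwa [(mpow_isHermitian hσ _).eq] at this
  have := posDef_conj (mpow_posDef hTpd γ) hspd.isUnit
  rw [(mpow_isHermitian hσ (1 / 2)).eq] at this
  simpa only [geomMean] using this

lemma geomMean_geomMean {ρ σ : Matrix ι ι ℂ} (hρ : ρ.PosDef) (hσ : σ.PosDef) (a b : ℝ) :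
    geomMean ρ (geomMean ρ σ b) a = geomMean ρ σ (b * a) := by
  set r := mpow ρ (1 / 2) with hr
  set r' := mpow ρ (-(1 / 2)) with hr'
  have hrpd := mpow_posDef hρ (1 / 2)
  have hr'pd := mpow_posDef hρ (-(1 / 2))
  have hrr' : r * r' = 1 := by
    rw [hr, hr', mpow_mul_mpow' hρ (c := 0) (by norm_num), mpow_zero hρ.isHermitian]
  have hr'r : r' * r = 1 := by
    rw [hr, hr', mpow_mul_mpow' hρ (c := 0) (by norm_num), mpow_zero hρ.isHermitian]
  set S := r' * σ * r' with hS
  have hSpd : S.PosDef := by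
    have := posDef_conj hσ hr'pd.isUnit
    rwa [(mpow_isHermitian hρ _).eq] at this
  have hmid : r' * (r * mpow S b * r) * r' = mpow S b := by
    simp only [← mul_assoc]
    rw [hr'r, one_mul, mul_assoc (mpow S b) r r', hrr', mul_one]
  simp only [geomMean]
  rw [← hr, ← hr', ← hS, hmid, mpow_mpow hSpd]


/-- Composition law for Kubo-Ando weighted geometric means:
`(σ #_{γ₂} ρ) #_{γ₁} ρ = σ #_{1 - (1-γ₁)(1-γ₂)} ρ` for positive definite `ρ, σ`
and `γ₁, γ₂ ∈ (0,1)`. -/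
theorem geomMean_comp {n : ℕ} (ρ σ : Matrix (Fin n) (Fin n) ℂ)
    (hρ : ρ.PosDef) (hσ : σ.PosDef)
    (γ₁ γ₂ : ℝ) (hγ₁ : γ₁ ∈ Set.Ioo (0 : ℝ) 1) (hγ₂ : γ₂ ∈ Set.Ioo (0 : ℝ) 1) :
    geomMean (geomMean σ ρ γ₂) ρ γ₁ = geomMean σ ρ (1 - (1 - γ₁) * (1 - γ₂)) := by
  calc geomMean (geomMean σ ρ γ₂) ρ γ₁
      = geomMean ρ (geomMean σ ρ γ₂) (1 - γ₁) :=
        geomMean_symm (geomMean_posDef hσ hρ γ₂) hρ γ₁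
    _ = geomMean ρ (geomMean ρ σ (1 - γ₂)) (1 - γ₁) := by
        rw [geomMean_symm hσ hρ γ₂]
    _ = geomMean ρ σ ((1 - γ₂) * (1 - γ₁)) := geomMean_geomMean hρ hσ (1 - γ₁) (1 - γ₂)
    _ = geomMean σ ρ (1 - (1 - γ₂) * (1 - γ₁)) := geomMean_symm hρ hσ _
    _ = geomMean σ ρ (1 - (1 - γ₁) * (1 - γ₂)) := by ring_nf
end

section
/- Let X be a finite type, P : X → ℝ with ∑_x P(x) = 1, and W : X → (positive definite n×n complex matrices). Set G := exp(∑_x P(x)·log(W x)), the matrix exponential of the Hermitian matrix ∑_x P(x)·log(W x). Then for every state ω: ∑_x P(x)·D^{Um}(ω‖W x) ≥ − log Tr G, with equality if and only if ω = G / Tr G. In particular, G/Tr G is the unique P-weighted left Umegaki-divergence center of W, and the corresponding divergence radius equals −log Tr G. -/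
open Matrix
open scoped ComplexOrder

/-- The Umegaki relative entropy `D^Um(ω‖τ) := Tr[ω · nlog ω] − Tr[ω · log τ]`
(note `Real.log 0 = 0`, so `mfun Real.log` implements `nlog`). -/
noncomputable def DUm {ι : Type*} [Fintype ι] [DecidableEq ι]
    (ω τ : Matrix ι ι ℂ) : ℝ :=
  ((ω * mfun Real.log ω).trace).re - ((ω * mfun Real.log τ).trace).re

/-- `G := exp(∑ x, P x · log (W x))`, the matrix exponential of the Hermitian matrix
`∑ x, P x · log (W x)`. -/
noncomputable def logExpMix {n : ℕ} {X : Type*} [Fintype X]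
    (P : X → ℝ) (W : X → Matrix (Fin n) (Fin n) ℂ) : Matrix (Fin n) (Fin n) ℂ :=
  mfun Real.exp (∑ x, P x • mfun Real.log (W x))

namespace UmAux

set_option linter.unusedSectionVars false

variable {ι : Type*} [Fintype ι] [DecidableEq ι]

lemma mfun_of {A : Matrix ι ι ℂ} (hA : A.IsHermitian) (f : ℝ → ℝ) :
    mfun f A = cfc f A := by
  rw [mfun, dif_pos hA, ← hA.cfc_eq]

lemma mfun_spectral {A : Matrix ι ι ℂ} (hA : A.IsHermitian) (f : ℝ → ℝ) :
    mfun f A = (hA.eigenvectorUnitary : Matrix ι ι ℂ)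
      * diagonal (RCLike.ofReal ∘ f ∘ hA.eigenvalues)
      * star (hA.eigenvectorUnitary : Matrix ι ι ℂ) := by
  rw [mfun, dif_pos hA]; rfl

lemma mfun_isHermitian (f : ℝ → ℝ) (A : Matrix ι ι ℂ) : (mfun f A).IsHermitian := by
  by_cases hA : A.IsHermitian
  · rw [mfun_of hA]
    have h : IsSelfAdjoint (cfc f A) := cfc_predicate f A
    exact h
  · rw [mfun, dif_neg hA]
    exact isHermitian_zero

/-- trace of conjugation by a unitary -/
lemma trace_conj {U : Matrix ι ι ℂ} (hU : U ∈ unitaryGroup ι ℂ) (B : Matrix ι ι ℂ) :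
    (U * B * star U).trace = B.trace := by
  rw [trace_mul_cycle, mem_unitaryGroup_iff'.mp hU, one_mul]

lemma trace_form (N P : Matrix ι ι ℂ) (a b : ι → ℝ) :
    (diagonal (RCLike.ofReal ∘ a) * (N * (diagonal (RCLike.ofReal ∘ b) * P))).trace
    = ∑ i, ∑ j, (RCLike.ofReal (a i) : ℂ) * RCLike.ofReal (b j) * (N i j * P j i) := by
  have key : ∀ i, ((diagonal (RCLike.ofReal ∘ a)
        * (N * (diagonal (RCLike.ofReal ∘ b) * P)) : Matrix ι ι ℂ)) i i
      = ∑ j, (RCLike.ofReal (a i) : ℂ) * RCLike.ofReal (b j) * (N i j * P j i) := by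
    intro i
    rw [Matrix.diagonal_mul, Matrix.mul_apply, Finset.mul_sum]
    refine Finset.sum_congr rfl fun j _ => ?_
    rw [Matrix.diagonal_mul]
    simp only [Function.comp_apply]
    ring
  simp only [Matrix.trace, Matrix.diag]
  exact Finset.sum_congr rfl fun i _ => key i

lemma trace_pair (U V : Matrix ι ι ℂ) (a b : ι → ℝ) :
    ((U * diagonal (RCLike.ofReal ∘ a) * star U)
      * (V * diagonal (RCLike.ofReal ∘ b) * star V)).trace
    = ((∑ i, ∑ j, a i * b j * Complex.normSq ((star U * V) i j) : ℝ) : ℂ) := by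
  have h : (U * diagonal (RCLike.ofReal ∘ a) * star U)
      * (V * diagonal (RCLike.ofReal ∘ b) * star V)
      = U * (diagonal (RCLike.ofReal ∘ a)
          * ((star U * V) * (diagonal (RCLike.ofReal ∘ b) * (star V)))) := by
    simp only [mul_assoc]
  rw [h, trace_mul_comm]
  have h2 : diagonal (RCLike.ofReal ∘ a)
        * (star U * V * (diagonal (RCLike.ofReal ∘ b) * star V)) * U
      = diagonal (RCLike.ofReal ∘ a)
        * ((star U * V) * (diagonal (RCLike.ofReal ∘ b) * (star V * U))) := by
    simp only [mul_assoc]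
  rw [h2, trace_form]
  have h3 : ∀ i j, (star V * U) j i = star ((star U * V) i j) := by
    intro i j
    have hsw : star V * U = star (star U * V) := by
      rw [Matrix.star_mul, star_star]
    rw [hsw, Matrix.star_eq_conjTranspose, Matrix.conjTranspose_apply]
  push_cast
  refine Finset.sum_congr rfl fun i _ => Finset.sum_congr rfl fun j _ => ?_
  rw [h3, Complex.star_def, Complex.mul_conj]
  norm_num

lemma posDef_conj {U D : Matrix ι ι ℂ} (hU : U ∈ unitaryGroup ι ℂ) (hD : D.PosDef) :
    (U * D * star U).PosDef := by
  refine posDef_iff_dotProduct_mulVec.mpr ⟨?_, ?_⟩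
  · show (U * D * star U)ᴴ = U * D * star U
    rw [Matrix.star_eq_conjTranspose, Matrix.conjTranspose_mul, Matrix.conjTranspose_mul,
      Matrix.conjTranspose_conjTranspose, hD.1.eq, mul_assoc]
  · intro x hx
    have hy : star U *ᵥ x ≠ 0 := by
      intro h
      apply hx
      have h2 : U *ᵥ (star U *ᵥ x) = x := by
        rw [mulVec_mulVec, mem_unitaryGroup_iff.mp hU, one_mulVec]
      rw [h, mulVec_zero] at h2
      exact h2.symm
    have hpos := hD.dotProduct_mulVec_pos hy
    have hrw : star x ⬝ᵥ ((U * D * star U) *ᵥ x)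
        = star (star U *ᵥ x) ⬝ᵥ (D *ᵥ (star U *ᵥ x)) := by
      rw [← mulVec_mulVec, ← mulVec_mulVec, dotProduct_mulVec, star_mulVec,
        Matrix.star_eq_conjTranspose, Matrix.conjTranspose_conjTranspose,
        ← dotProduct_mulVec]
    rw [hrw]
    exact hpos

lemma posDef_smul {D : Matrix ι ι ℂ} (hD : D.PosDef) {c : ℝ} (hc : 0 < c) :
    (c • D).PosDef := by
  refine posDef_iff_dotProduct_mulVec.mpr ⟨?_, ?_⟩
  · show (c • D)ᴴ = c • D
    rw [Matrix.conjTranspose_smul, star_trivial, hD.1.eq]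
  · intro x hx
    have hq := hD.dotProduct_mulVec_pos hx
    have hrw : star x ⬝ᵥ ((c • D) *ᵥ x) = (c : ℂ) * (star x ⬝ᵥ (D *ᵥ x)) := by
      rw [smul_mulVec, dotProduct_smul]
      simp [Complex.real_smul]
    rw [hrw]
    exact mul_pos (by exact_mod_cast hc) hq

lemma posDef_mfun_exp {L : Matrix ι ι ℂ} (hL : L.IsHermitian) :
    (mfun Real.exp L).PosDef := by
  rw [mfun_spectral hL]
  refine posDef_conj hL.eigenvectorUnitary.2 ?_
  rw [posDef_diagonal_iff]
  intro i
  simp only [Function.comp_apply]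
  exact Complex.zero_lt_real.mpr (Real.exp_pos _)

lemma trace_mfun {A : Matrix ι ι ℂ} (hA : A.IsHermitian) (f : ℝ → ℝ) :
    (mfun f A).trace = ((∑ i, f (hA.eigenvalues i) : ℝ) : ℂ) := by
  rw [mfun_spectral hA, trace_conj hA.eigenvectorUnitary.2, trace_diagonal]
  push_cast
  rfl

lemma glemma {p q : ℝ} (hp : 0 ≤ p) (hq : 0 < q) :
    0 ≤ p * Real.log p - p * Real.log q - p + q ∧
      (p * Real.log p - p * Real.log q - p + q = 0 ↔ p = q) := by
  rcases eq_or_lt_of_le hp with h0 | hp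
  · simp only [← h0, zero_mul, sub_zero, zero_sub, neg_zero, zero_add]
    refine ⟨hq.le, ?_, fun h => absurd h.symm hq.ne'⟩
    intro h
    exact absurd h hq.ne'
  · have hdiv : 0 < q / p := div_pos hq hp
    have h1 : Real.log q - Real.log p ≤ q / p - 1 := by
      rw [← Real.log_div hq.ne' hp.ne']
      exact Real.log_le_sub_one_of_pos hdiv
    have hpq : p * (q / p) = q := by field_simp
    have h2 : p * (Real.log q - Real.log p) ≤ q - p := by
      have := mul_le_mul_of_nonneg_left h1 hp.le
      rw [mul_sub, mul_sub, hpq, mul_one] at this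
      linarith
    constructor
    · nlinarith [h2]
    constructor
    · intro heq
      by_contra hne
      have hne' : q / p ≠ 1 := by
        intro h
        apply hne
        nlinarith [hpq, h]
      have h3 : Real.log (q / p) < q / p - 1 := Real.log_lt_sub_one_of_pos hdiv hne'
      rw [Real.log_div hq.ne' hp.ne'] at h3
      have h4 := mul_lt_mul_of_pos_left h3 hp
      rw [mul_sub, mul_sub, hpq, mul_one] at h4
      nlinarith
    · intro h
      subst h
      ring

lemma klein_aux {U V : Matrix ι ι ℂ} (hUu : U ∈ unitaryGroup ι ℂ) (hVu : V ∈ unitaryGroup ι ℂ)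
    (p q : ι → ℝ) (hp : ∀ i, 0 ≤ p i) (hq : ∀ j, 0 < q j)
    (hps : ∑ i, p i = 1) (hqs : ∑ j, q j = 1) :
    (0 ≤ (∑ i, p i * Real.log (p i))
        - ∑ i, ∑ j, p i * Real.log (q j) * Complex.normSq ((star U * V) i j))
    ∧ ((∑ i, p i * Real.log (p i))
        - (∑ i, ∑ j, p i * Real.log (q j) * Complex.normSq ((star U * V) i j)) = 0
      → U * diagonal (RCLike.ofReal ∘ p) * star U
          = V * diagonal (RCLike.ofReal ∘ q) * star V) := by
  set M : Matrix ι ι ℂ := star U * V with hMdef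
  set g : ι → ι → ℝ := fun i j => Complex.normSq (M i j) with hgdef
  have hMM : M * star M = 1 := by
    rw [hMdef, Matrix.star_mul, star_star]
    calc star U * V * (star V * U) = star U * (V * star V) * U := by
          simp only [mul_assoc]
      _ = 1 := by rw [mem_unitaryGroup_iff.mp hVu, mul_one, mem_unitaryGroup_iff'.mp hUu]
  have hMM' : star M * M = 1 := by
    rw [hMdef, Matrix.star_mul, star_star]
    calc star V * U * (star U * V) = star V * (U * star U) * V := by
          simp only [mul_assoc]
      _ = 1 := by rw [mem_unitaryGroup_iff.mp hUu, mul_one, mem_unitaryGroup_iff'.mp hVu]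
  have hrow : ∀ i, ∑ j, g i j = 1 := by
    intro i
    have h := congrFun (congrFun hMM i) i
    rw [Matrix.mul_apply, Matrix.one_apply_eq] at h
    have h2 : ∀ j, M i j * (star M) j i = ((g i j : ℝ) : ℂ) := by
      intro j
      rw [Matrix.star_eq_conjTranspose, Matrix.conjTranspose_apply, Complex.star_def,
        Complex.mul_conj]
    rw [Finset.sum_congr rfl (fun j _ => h2 j), ← Complex.ofReal_sum] at h
    exact_mod_cast h
  have hcol : ∀ j, ∑ i, g i j = 1 := by
    intro j
    have h := congrFun (congrFun hMM' j) j
    rw [Matrix.mul_apply, Matrix.one_apply_eq] at h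
    have h2 : ∀ i, (star M) j i * M i j = ((g i j : ℝ) : ℂ) := by
      intro i
      rw [Matrix.star_eq_conjTranspose, Matrix.conjTranspose_apply, Complex.star_def,
        mul_comm, Complex.mul_conj]
    rw [Finset.sum_congr rfl (fun i _ => h2 i), ← Complex.ofReal_sum] at h
    exact_mod_cast h
  have hS : (∑ i, p i * Real.log (p i))
      - (∑ i, ∑ j, p i * Real.log (q j) * Complex.normSq (M i j))
      = ∑ i, ∑ j, g i j * (p i * Real.log (p i) - p i * Real.log (q j) - p i + q j) := by
    have e1 : ∑ i, ∑ j, g i j * (p i * Real.log (p i)) = ∑ i, p i * Real.log (p i) := by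
      refine Finset.sum_congr rfl fun i _ => ?_
      rw [← Finset.sum_mul, hrow i, one_mul]
    have e2 : ∑ i, ∑ j, g i j * p i = 1 := by
      rw [← hps]
      refine Finset.sum_congr rfl fun i _ => ?_
      rw [← Finset.sum_mul, hrow i, one_mul]
    have e3 : ∑ i, ∑ j, g i j * q j = 1 := by
      rw [Finset.sum_comm, ← hqs]
      refine Finset.sum_congr rfl fun j _ => ?_
      rw [← Finset.sum_mul, hcol j, one_mul]
    have e4 : ∑ i, ∑ j, g i j * (p i * Real.log (q j))
        = ∑ i, ∑ j, p i * Real.log (q j) * Complex.normSq (M i j) := by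
      refine Finset.sum_congr rfl fun i _ => Finset.sum_congr rfl fun j _ => by
        rw [hgdef]; ring
    calc (∑ i, p i * Real.log (p i))
        - (∑ i, ∑ j, p i * Real.log (q j) * Complex.normSq (M i j))
        = (∑ i, ∑ j, g i j * (p i * Real.log (p i)))
          - (∑ i, ∑ j, g i j * (p i * Real.log (q j)))
          - (∑ i, ∑ j, g i j * p i) + (∑ i, ∑ j, g i j * q j) := by
          rw [e1, e2, e3, e4]; ring
      _ = ∑ i, ∑ j, g i j * (p i * Real.log (p i) - p i * Real.log (q j) - p i + q j) := by
          rw [← Finset.sum_sub_distrib, ← Finset.sum_sub_distrib, ← Finset.sum_add_distrib]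
          refine Finset.sum_congr rfl fun i _ => ?_
          rw [← Finset.sum_sub_distrib, ← Finset.sum_sub_distrib, ← Finset.sum_add_distrib]
          refine Finset.sum_congr rfl fun j _ => by ring
  have hterm_nonneg : ∀ i j,
      0 ≤ g i j * (p i * Real.log (p i) - p i * Real.log (q j) - p i + q j) :=
    fun i j => mul_nonneg (Complex.normSq_nonneg _) (glemma (hp i) (hq j)).1
  have hge : 0 ≤ (∑ i, p i * Real.log (p i))
      - ∑ i, ∑ j, p i * Real.log (q j) * Complex.normSq (M i j) := by
    rw [hS]
    exact Finset.sum_nonneg fun i _ => Finset.sum_nonneg fun j _ => hterm_nonneg i j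
  refine ⟨hge, ?_⟩
  · intro hzero
    rw [hS] at hzero
    have hterms : ∀ i ∈ Finset.univ, ∀ j ∈ (Finset.univ : Finset ι),
        g i j * (p i * Real.log (p i) - p i * Real.log (q j) - p i + q j) = 0 := by
      intro i hi
      have houter := (Finset.sum_eq_zero_iff_of_nonneg
        (fun i _ => Finset.sum_nonneg fun j _ => hterm_nonneg i j)).mp hzero i hi
      exact (Finset.sum_eq_zero_iff_of_nonneg (fun j _ => hterm_nonneg i j)).mp houter
    have hMD : M * diagonal (RCLike.ofReal ∘ q) = diagonal (RCLike.ofReal ∘ p) * M := by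
      ext i j
      rw [Matrix.mul_diagonal, Matrix.diagonal_mul]
      rcases eq_or_ne (M i j) 0 with h | h
      · rw [h, zero_mul, mul_zero]
      · have hg0 : g i j ≠ 0 := fun hh => h (Complex.normSq_eq_zero.mp hh)
        have hpq : p i = q j := by
          have t := hterms i (Finset.mem_univ i) j (Finset.mem_univ j)
          exact ((glemma (hp i) (hq j)).2).mp ((mul_eq_zero.mp t).resolve_left hg0)
        rw [Function.comp_apply, Function.comp_apply, ← hpq]
        ring
    have hUU' : U * star U = 1 := mem_unitaryGroup_iff.mp hUu
    calc U * diagonal (RCLike.ofReal ∘ p) * star U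
        = U * (diagonal (RCLike.ofReal ∘ p) * (M * star M)) * star U := by
          rw [hMM, mul_one]
      _ = U * (M * diagonal (RCLike.ofReal ∘ q) * star M) * star U := by
          have hmid : diagonal (RCLike.ofReal ∘ p) * (M * star M)
              = M * diagonal (RCLike.ofReal ∘ q) * star M := by
            rw [← mul_assoc, ← hMD]
          rw [hmid]
      _ = (U * star U) * (V * diagonal (RCLike.ofReal ∘ q) * star V) * (U * star U) := by
          rw [hMdef, Matrix.star_mul, star_star]
          simp only [mul_assoc]
      _ = V * diagonal (RCLike.ofReal ∘ q) * star V := by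
          rw [hUU', one_mul, mul_one]

lemma trace_eq_sum_eigenvalues {A : Matrix ι ι ℂ} (hA : A.IsHermitian) :
    A.trace = ((∑ i, hA.eigenvalues i : ℝ) : ℂ) := by
  have h := congrArg Matrix.trace hA.spectral_theorem
  rw [Unitary.conjStarAlgAut_apply, trace_conj hA.eigenvectorUnitary.2, trace_diagonal] at h
  rw [h]
  push_cast
  rfl

lemma klein {ω σ : Matrix ι ι ℂ} (hω : ω.PosSemidef) (hσ : σ.PosDef)
    (hωt : ω.trace = 1) (hσt : σ.trace = 1) :
    0 ≤ DUm ω σ ∧ (DUm ω σ = 0 ↔ ω = σ) := by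
  have hωH : ω.IsHermitian := hω.1
  have hσH : σ.IsHermitian := hσ.isHermitian
  have hUu := hωH.eigenvectorUnitary.2
  have hVu := hσH.eigenvectorUnitary.2
  have hpsum : ∑ i, hωH.eigenvalues i = 1 := by
    have h := trace_eq_sum_eigenvalues hωH
    rw [hωt] at h
    exact_mod_cast h.symm
  have hqsum : ∑ j, hσH.eigenvalues j = 1 := by
    have h := trace_eq_sum_eigenvalues hσH
    rw [hσt] at h
    exact_mod_cast h.symm
  have hE1 : ((ω * mfun Real.log ω).trace).re
      = ∑ i, hωH.eigenvalues i * Real.log (hωH.eigenvalues i) := by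
    have e1 := congrArg₂ HMul.hMul hωH.spectral_theorem (mfun_spectral hωH Real.log)
    rw [e1, Unitary.conjStarAlgAut_apply, trace_pair, Complex.ofReal_re, mem_unitaryGroup_iff'.mp hUu]
    refine Finset.sum_congr rfl fun i _ => ?_
    have hone : ∀ j, Complex.normSq ((1 : Matrix ι ι ℂ) i j) = if i = j then 1 else 0 := by
      intro j
      rw [Matrix.one_apply]
      split <;> simp
    simp only [hone, mul_ite, mul_one, mul_zero, Finset.sum_ite_eq, Finset.mem_univ, if_true,
      Function.comp_apply]
  have hE2 : ((ω * mfun Real.log σ).trace).re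
      = ∑ i, ∑ j, hωH.eigenvalues i * Real.log (hσH.eigenvalues j)
          * Complex.normSq ((star (hωH.eigenvectorUnitary : Matrix ι ι ℂ)
              * (hσH.eigenvectorUnitary : Matrix ι ι ℂ)) i j) := by
    have e2 := congrArg₂ HMul.hMul hωH.spectral_theorem (mfun_spectral hσH Real.log)
    rw [e2, Unitary.conjStarAlgAut_apply, trace_pair, Complex.ofReal_re]
    simp only [Function.comp_apply]
  have hD : DUm ω σ = (∑ i, hωH.eigenvalues i * Real.log (hωH.eigenvalues i))
      - ∑ i, ∑ j, hωH.eigenvalues i * Real.log (hσH.eigenvalues j)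
          * Complex.normSq ((star (hωH.eigenvectorUnitary : Matrix ι ι ℂ)
              * (hσH.eigenvectorUnitary : Matrix ι ι ℂ)) i j) := by
    rw [DUm, hE1, hE2]
  obtain ⟨h1, h2⟩ := klein_aux hUu hVu hωH.eigenvalues hσH.eigenvalues
    hω.eigenvalues_nonneg hσ.eigenvalues_pos hpsum hqsum
  refine ⟨hD ▸ h1, fun h => ?_, fun h => by rw [h, DUm]; exact sub_self _⟩
  have h3 := h2 (by rw [← hD]; exact h)
  rw [hωH.spectral_theorem, Unitary.conjStarAlgAut_apply, h3]; exact hσH.spectral_theorem.symm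

end UmAux

open UmAux in
/-- **The `P`-weighted left Umegaki divergence center and radius.**
Let `X` be finite, `P : X → ℝ` with `∑ x, P x = 1`, `W x` positive definite, and
`G := exp(∑ x, P x · log (W x))`. Then for every state `ω`:
`∑ x, P x · D^Um(ω ‖ W x) ≥ − log Tr G`, with equality iff `ω = G / Tr G`. -/
theorem umegaki_divergence_center {n : ℕ} {X : Type*} [Fintype X]
    (P : X → ℝ) (hP : ∑ x, P x = 1)
    (W : X → Matrix (Fin n) (Fin n) ℂ) (hW : ∀ x, (W x).PosDef) :
    ∀ ω : Matrix (Fin n) (Fin n) ℂ, ω.PosSemidef → ω.trace = 1 →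
      (∑ x, P x * DUm ω (W x) ≥ - Real.log (((logExpMix P W).trace).re))
      ∧ (∑ x, P x * DUm ω (W x) = - Real.log (((logExpMix P W).trace).re)
          ↔ ω = (((logExpMix P W).trace).re)⁻¹ • logExpMix P W) := by
  intro ω hωpsd hωtr
  have hne : Nonempty (Fin n) := by
    rcases isEmpty_or_nonempty (Fin n) with h | h
    · exfalso
      have h0 : ω.trace = 0 := by
        simp [Matrix.trace, Finset.univ_eq_empty]
      rw [h0] at hωtr
      exact one_ne_zero hωtr.symm
    · exact h
  simp only [logExpMix]
  set L : Matrix (Fin n) (Fin n) ℂ := ∑ x, P x • mfun Real.log (W x) with hLdef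
  have hL : L.IsHermitian := by
    rw [hLdef]
    show (∑ x, P x • mfun Real.log (W x))ᴴ = ∑ x, P x • mfun Real.log (W x)
    rw [Matrix.conjTranspose_sum]
    refine Finset.sum_congr rfl fun x _ => ?_
    rw [Matrix.conjTranspose_smul, star_trivial, (mfun_isHermitian Real.log (W x)).eq]
  have hL' : IsSelfAdjoint L := hL
  have hG : (mfun Real.exp L).PosDef := posDef_mfun_exp hL
  have hGtr : (mfun Real.exp L).trace = ((∑ i, Real.exp (hL.eigenvalues i) : ℝ) : ℂ) :=
    trace_mfun hL Real.exp
  set c : ℝ := ((mfun Real.exp L).trace).re with hcdef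
  have hc_eq : c = ∑ i, Real.exp (hL.eigenvalues i) := by
    rw [hcdef, hGtr, Complex.ofReal_re]
  have hc : 0 < c := by
    rw [hc_eq]
    exact Finset.sum_pos (fun i _ => Real.exp_pos _) Finset.univ_nonempty
  have hσ : (c⁻¹ • mfun Real.exp L).PosDef := posDef_smul hG (inv_pos.mpr hc)
  have hσtr : (c⁻¹ • mfun Real.exp L).trace = 1 := by
    rw [trace_smul, hGtr, ← hc_eq, Complex.real_smul, ← Complex.ofReal_mul,
      inv_mul_cancel₀ hc.ne']
    norm_num
  have hlogσ : mfun Real.log (c⁻¹ • mfun Real.exp L)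
      = (-(Real.log c)) • (1 : Matrix (Fin n) (Fin n) ℂ) + L := by
    rw [mfun_of hσ.isHermitian, mfun_of hL Real.exp,
      ← cfc_smul c⁻¹ Real.exp L (Matrix.finite_real_spectrum.continuousOn Real.exp),
      ← cfc_comp Real.log (fun x => c⁻¹ • Real.exp x) L hL'
        ((Matrix.finite_real_spectrum.image (fun x => c⁻¹ • Real.exp x)).continuousOn Real.log)
        (Matrix.finite_real_spectrum.continuousOn (fun x => c⁻¹ • Real.exp x))]
    have heq : (Real.log ∘ fun x => c⁻¹ • Real.exp x) = fun x => -Real.log c + x := by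
      funext x
      simp only [Function.comp_apply, smul_eq_mul]
      rw [Real.log_mul (inv_ne_zero hc.ne') (Real.exp_ne_zero x), Real.log_inv, Real.log_exp]
    rw [heq, cfc_const_add (-Real.log c) (fun x => x) L
      (Matrix.finite_real_spectrum.continuousOn (fun x => x)) hL',
      cfc_id' ℝ L, Algebra.algebraMap_eq_smul_one]
  have hωL : ((ω * L).trace).re = ∑ x, P x * ((ω * mfun Real.log (W x)).trace).re := by
    have hmul : ω * L = ∑ x, P x • (ω * mfun Real.log (W x)) := by
      rw [hLdef, Finset.mul_sum]
      exact Finset.sum_congr rfl fun x _ => (mul_smul_comm _ _ _)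
    rw [hmul, trace_sum, Complex.re_sum]
    refine Finset.sum_congr rfl fun x _ => ?_
    rw [trace_smul]
    simp [Complex.real_smul, Complex.mul_re]
  have hDσ : DUm ω (c⁻¹ • mfun Real.exp L)
      = ((ω * mfun Real.log ω).trace).re - (((ω * L).trace).re - Real.log c) := by
    rw [DUm, hlogσ]
    have hsplit : ω * ((-(Real.log c)) • (1 : Matrix (Fin n) (Fin n) ℂ) + L)
        = (-(Real.log c)) • ω + ω * L := by
      rw [mul_add, mul_smul_comm, mul_one]
    rw [hsplit, trace_add, trace_smul, Complex.add_re, hωtr]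
    simp [Complex.real_smul]
    ring
  have hkey : ∑ x, P x * DUm ω (W x) = DUm ω (c⁻¹ • mfun Real.exp L) - Real.log c := by
    rw [hDσ, hωL]
    unfold DUm
    rw [Finset.sum_congr rfl fun x _ => mul_sub (P x) _ _, Finset.sum_sub_distrib,
      ← Finset.sum_mul, hP, one_mul]
    ring
  obtain ⟨hge, hiff⟩ := klein hωpsd hσ hωtr hσtr
  constructor
  · rw [hkey]
    have := hge
    linarith
  · rw [hkey]
    constructor
    · intro h
      exact hiff.mp (by linarith)
    · intro h
      have h0 : DUm ω (c⁻¹ • mfun Real.exp L) = 0 := hiff.mpr h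
      rw [h0]
      ring
end

section
/- Let ρ, σ be positive definite n×n complex matrices with Tr ρ = Tr σ = 1, and let D₀, D₁ be nonnegative real-valued functions on pairs (ω, τ) with ω a state and τ a positive definite state. Define F(α) := inf { α·D₀(ω, ρ) + (1−α)·D₁(ω, σ) : ω a state }. Then: (i) lim_{α→0⁺} (1/(1−α))·F(α) = inf { D₁(ω, σ) : ω a state }; (ii) if in addition D₀ is strictly positive in the sense that D₀(ω, ρ) = 0 if and only if ω = ρ, and both ω ↦ D₀(ω, ρ) and ω ↦ D₁(ω, σ) are lower semicontinuous on the compact set of states, then lim_{α→1⁻} (1/(1−α))·F(α) = D₁(ρ, σ). -/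
open Matrix Filter
open scoped ComplexOrder Topology ComplexConjugate

section BarycentricAux

variable {n : ℕ}

variable {n : ℕ}

lemma quad_expand {ω : Matrix (Fin n) (Fin n) ℂ} (i j : Fin n) (c : ℂ) :
    star (Pi.single i 1 + Pi.single j c) ⬝ᵥ (ω *ᵥ (Pi.single i 1 + Pi.single j c))
      = ω i i + ω i j * c + conj c * ω j i + conj c * (ω j j * c) := by
  rw [star_add, ← Pi.single_star, ← Pi.single_star, mulVec_add, dotProduct_add,
    add_dotProduct, add_dotProduct]
  simp [Matrix.mulVec_single, single_dotProduct, Pi.single_apply,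
    mul_comm, mul_assoc, RCLike.star_def]
  ring

lemma diag_nonneg {ω : Matrix (Fin n) (Fin n) ℂ} (hω : ω.PosSemidef) (i : Fin n) :
    0 ≤ ω i i := by
  have h := hω.dotProduct_mulVec_nonneg (Pi.single i 1)
  rw [← Pi.single_star] at h
  simpa using h

lemma diag_re_le_one {ω : Matrix (Fin n) (Fin n) ℂ} (hω : ω.PosSemidef)
    (h1 : ω.trace = 1) (i : Fin n) : 0 ≤ (ω i i).re ∧ (ω i i).im = 0 ∧ (ω i i).re ≤ 1 := by
  have hle : ω i i ≤ 1 := by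
    have := Finset.single_le_sum (f := fun k => ω k k)
      (fun k _ => diag_nonneg hω k) (Finset.mem_univ i)
    rwa [show ∑ k, ω k k = ω.trace from rfl, h1] at this
  have hge := diag_nonneg hω i
  rw [Complex.le_def] at hle hge
  simp at hle hge
  exact ⟨hge.1, hge.2.symm, hle.1⟩

lemma entry_norm_le_one {ω : Matrix (Fin n) (Fin n) ℂ} (hω : ω.PosSemidef)
    (h1 : ω.trace = 1) (i j : Fin n) : ‖ω i j‖ ≤ 1 := by
  obtain ⟨hi0, hiim, hi1⟩ := diag_re_le_one hω h1 i
  obtain ⟨hj0, hjim, hj1⟩ := diag_re_le_one hω h1 j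
  rcases eq_or_ne (ω i j) 0 with h0 | h0
  · simp [h0]
  rcases eq_or_ne i j with rfl | hij
  · have : ω i i = ((ω i i).re : ℂ) := Complex.ext rfl (by simp [hiim])
    rw [this, Complex.norm_real, Real.norm_eq_abs, abs_of_nonneg hi0]
    exact hi1
  set a := ω i j with ha
  set r : ℝ := ‖a‖ with hr
  have hrpos : 0 < r := norm_pos_iff.mpr h0
  set c : ℂ := -conj a / r with hc
  have hji : ω j i = conj a := by
    have := congrArg star (hω.1.apply i j)
    simp only [star_star] at this
    rw [ha, this]; rfl
  have hac : a * c = -r := by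
    rw [hc]
    field_simp
    rw [Complex.mul_conj]
    norm_cast
    rw [Complex.normSq_eq_norm_sq, ← hr]
  have hnc : ‖c‖ = 1 := by
    rw [hc, norm_div, norm_neg, RCLike.norm_conj, Complex.norm_real,
      Real.norm_eq_abs, abs_of_nonneg hrpos.le, ← hr, div_self hrpos.ne']
  have hcc : conj c * c = 1 := by
    rw [Complex.conj_mul']
    norm_cast
    rw [hnc]
    norm_num
  have hq := hω.dotProduct_mulVec_nonneg (Pi.single i 1 + Pi.single j c)
  rw [quad_expand i j c] at hq
  have hterm3 : conj c * ω j i = -r := by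
    rw [hji, ← map_mul (starRingEnd ℂ), mul_comm c a, hac]
    simp [Complex.conj_ofReal]
  have hterm4 : conj c * (ω j j * c) = ω j j := by
    rw [mul_comm (ω j j) c, ← mul_assoc, mul_comm (conj c) c, mul_comm c (conj c), hcc, one_mul]
  rw [mul_comm (ω i j) c] at hq
  rw [show c * ω i j = -r by rw [mul_comm, ← ha, hac], hterm3, hterm4] at hq
  rw [Complex.le_def] at hq
  simp at hq
  -- hq.1 : 0 ≤ (ω i i).re + -r + -r + (ω j j).re  (roughly)
  nlinarith [hq.1]
lemma isCompact_states :
    IsCompact {ω : Matrix (Fin n) (Fin n) ℂ | ω.PosSemidef ∧ ω.trace = 1} := by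
  have hT : IsCompact {ω : Matrix (Fin n) (Fin n) ℂ |
      ∀ i j, ω i j ∈ Metric.closedBall (0:ℂ) 1} := by
    have heq : {ω : Matrix (Fin n) (Fin n) ℂ | ∀ i j, ω i j ∈ Metric.closedBall (0:ℂ) 1}
        = Set.pi Set.univ
            (fun _ : Fin n => Set.pi Set.univ fun _ : Fin n => Metric.closedBall (0:ℂ) 1) := by
      ext ω
      constructor
      · intro h i _
        intro j _
        exact h i j
      · intro h i j
        exact h i (Set.mem_univ i) j (Set.mem_univ j)
    rw [heq]
    exact isCompact_univ_pi fun _ => isCompact_univ_pi fun _ => isCompact_closedBall 0 1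
  refine hT.of_isClosed_subset ?_ ?_
  · have h1 : IsClosed {ω : Matrix (Fin n) (Fin n) ℂ | ω.IsHermitian} :=
      isClosed_eq (continuous_id.matrix_conjTranspose) continuous_id
    have h2 : ∀ x : Fin n → ℂ,
        IsClosed {ω : Matrix (Fin n) (Fin n) ℂ | 0 ≤ star x ⬝ᵥ ω *ᵥ x} := by
      intro x
      have hc : Continuous fun ω : Matrix (Fin n) (Fin n) ℂ => star x ⬝ᵥ ω *ᵥ x :=
        (continuous_const.dotProduct (continuous_id.matrix_mulVec continuous_const))
      have : {ω : Matrix (Fin n) (Fin n) ℂ | 0 ≤ star x ⬝ᵥ ω *ᵥ x}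
          = (fun ω : Matrix (Fin n) (Fin n) ℂ => star x ⬝ᵥ ω *ᵥ x) ⁻¹'
              ({z : ℂ | 0 ≤ z.re} ∩ {z : ℂ | z.im = 0}) := by
        ext ω
        simp only [Set.mem_setOf_eq, Set.mem_preimage, Set.mem_inter_iff, Complex.le_def]
        constructor
        · rintro ⟨h, h'⟩; exact ⟨by simpa using h, by simpa using h'.symm⟩
        · rintro ⟨h, h'⟩; exact ⟨by simpa using h, by simp [h']⟩
      rw [this]
      exact ((isClosed_le continuous_const Complex.continuous_re).inter
        (isClosed_eq Complex.continuous_im continuous_const)).preimage hc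
    have h3 : IsClosed {ω : Matrix (Fin n) (Fin n) ℂ | ω.trace = 1} :=
      isClosed_eq (continuous_id.matrix_trace) continuous_const
    have heq : {ω : Matrix (Fin n) (Fin n) ℂ | ω.PosSemidef ∧ ω.trace = 1}
        = ({ω : Matrix (Fin n) (Fin n) ℂ | ω.IsHermitian} ∩
            (⋂ x : Fin n → ℂ, {ω : Matrix (Fin n) (Fin n) ℂ | 0 ≤ star x ⬝ᵥ ω *ᵥ x})) ∩
          {ω : Matrix (Fin n) (Fin n) ℂ | ω.trace = 1} := by
      ext ω
      simp only [Set.mem_setOf_eq, Set.mem_inter_iff, Set.mem_iInter, Matrix.posSemidef_iff_dotProduct_mulVec]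

    rw [heq]
    exact ((h1.inter (isClosed_iInter h2)).inter h3)
  · rintro ω ⟨hpsd, htr⟩ 
    intro i j
    simpa [Metric.mem_closedBall, dist_zero_right] using entry_norm_le_one hpsd htr i j

lemma lsc_pos_uniform {X : Type*} [TopologicalSpace X] {K : Set X} (hK : IsCompact K)
    {f : X → ℝ} (hf : LowerSemicontinuousOn f K) (hpos : ∀ x ∈ K, 0 < f x) :
    ∃ c > 0, ∀ x ∈ K, c ≤ f x := by
  rcases K.eq_empty_or_nonempty with rfl | ⟨x₀, hx₀⟩
  · exact ⟨1, one_pos, by simp⟩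
  have hU : ∀ x ∈ K, {y | y ∈ K → f x / 2 < f y} ∈ 𝓝 x := by
    intro x hx
    have h := hf x hx (f x / 2) (by linarith [hpos x hx])
    rwa [eventually_nhdsWithin_iff] at h
  obtain ⟨t, htK, hcover⟩ := hK.elim_nhds_subcover (fun x => {y | y ∈ K → f x / 2 < f y}) hU
  have htne : t.Nonempty := by
    rcases Set.mem_iUnion₂.mp (hcover hx₀) with ⟨y, hy, _⟩
    exact ⟨y, hy⟩
  refine ⟨t.inf' htne (fun x => f x / 2), ?_, ?_⟩
  · rw [gt_iff_lt, Finset.lt_inf'_iff]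
    intro b hb
    linarith [hpos b (htK b hb)]
  · intro x hx
    rcases Set.mem_iUnion₂.mp (hcover hx) with ⟨y, hy, hxy⟩
    have := hxy hx
    calc t.inf' htne (fun x => f x / 2) ≤ f y / 2 := Finset.inf'_le _ hy
      _ ≤ f x := le_of_lt this

end BarycentricAux

/-- **Limiting values of the barycentric Rényi quantities.**
Let `ρ, σ` be positive definite states and `D₀, D₁` nonnegative real-valued functions on
pairs (state, positive definite state). With
`F(α) := inf { α·D₀(ω,ρ) + (1−α)·D₁(ω,σ) : ω a state }`:
(i) `lim_{α→0⁺} (1/(1−α))·F(α) = inf { D₁(ω,σ) : ω a state }`;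
(ii) if moreover `D₀(·,ρ)` vanishes exactly at `ρ` and both `D₀(·,ρ)` and `D₁(·,σ)` are
lower semicontinuous on the (compact) set of states, then
`lim_{α→1⁻} (1/(1−α))·F(α) = D₁(ρ,σ)`. -/
theorem barycentric_F_limits {n : ℕ}
    (ρ σ : Matrix (Fin n) (Fin n) ℂ)
    (hρ : ρ.PosDef) (hσ : σ.PosDef) (hρ1 : ρ.trace = 1) (hσ1 : σ.trace = 1)
    (D₀ D₁ : Matrix (Fin n) (Fin n) ℂ → Matrix (Fin n) (Fin n) ℂ → ℝ)
    (hD₀ : ∀ ω τ : Matrix (Fin n) (Fin n) ℂ,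
      ω.PosSemidef → ω.trace = 1 → τ.PosDef → τ.trace = 1 → 0 ≤ D₀ ω τ)
    (hD₁ : ∀ ω τ : Matrix (Fin n) (Fin n) ℂ,
      ω.PosSemidef → ω.trace = 1 → τ.PosDef → τ.trace = 1 → 0 ≤ D₁ ω τ) :
    (Filter.Tendsto
        (fun α : ℝ => (1 / (1 - α)) * sInf {r : ℝ | ∃ ω : Matrix (Fin n) (Fin n) ℂ,
            ω.PosSemidef ∧ ω.trace = 1 ∧ r = α * D₀ ω ρ + (1 - α) * D₁ ω σ})
        (nhdsWithin 0 (Set.Ioi (0 : ℝ)))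
        (nhds (sInf {r : ℝ | ∃ ω : Matrix (Fin n) (Fin n) ℂ,
            ω.PosSemidef ∧ ω.trace = 1 ∧ r = D₁ ω σ})))
    ∧ ((∀ ω : Matrix (Fin n) (Fin n) ℂ, ω.PosSemidef → ω.trace = 1 →
          (D₀ ω ρ = 0 ↔ ω = ρ)) →
        LowerSemicontinuousOn (fun ω => D₀ ω ρ)
          {ω : Matrix (Fin n) (Fin n) ℂ | ω.PosSemidef ∧ ω.trace = 1} →
        LowerSemicontinuousOn (fun ω => D₁ ω σ)
          {ω : Matrix (Fin n) (Fin n) ℂ | ω.PosSemidef ∧ ω.trace = 1} →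
        Filter.Tendsto
          (fun α : ℝ => (1 / (1 - α)) * sInf {r : ℝ | ∃ ω : Matrix (Fin n) (Fin n) ℂ,
              ω.PosSemidef ∧ ω.trace = 1 ∧ r = α * D₀ ω ρ + (1 - α) * D₁ ω σ})
          (nhdsWithin 1 (Set.Iio (1 : ℝ)))
          (nhds (D₁ ρ σ))) := by
  have hρS : ρ.PosSemidef := hρ.posSemidef
  set R : ℝ → Set ℝ := fun α => {r : ℝ | ∃ ω : Matrix (Fin n) (Fin n) ℂ,
      ω.PosSemidef ∧ ω.trace = 1 ∧ r = α * D₀ ω ρ + (1 - α) * D₁ ω σ} with hR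
  have hRne : ∀ α : ℝ, (R α).Nonempty := fun α => ⟨_, ρ, hρS, hρ1, rfl⟩
  have hRbdd : ∀ α : ℝ, 0 ≤ α → α ≤ 1 → BddBelow (R α) := by
    intro α hα0 hα1
    refine ⟨0, ?_⟩
    rintro r ⟨ω, h1, h2, rfl⟩
    have hd0 := hD₀ ω ρ h1 h2 hρ hρ1
    have hd1 := hD₁ ω σ h1 h2 hσ hσ1
    nlinarith
  constructor
  · -- Part (i)
    set L := sInf {r : ℝ | ∃ ω : Matrix (Fin n) (Fin n) ℂ,
        ω.PosSemidef ∧ ω.trace = 1 ∧ r = D₁ ω σ} with hLdef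
    have hS1ne : {r : ℝ | ∃ ω : Matrix (Fin n) (Fin n) ℂ,
        ω.PosSemidef ∧ ω.trace = 1 ∧ r = D₁ ω σ}.Nonempty := ⟨_, ρ, hρS, hρ1, rfl⟩
    have hS1bdd : BddBelow {r : ℝ | ∃ ω : Matrix (Fin n) (Fin n) ℂ,
        ω.PosSemidef ∧ ω.trace = 1 ∧ r = D₁ ω σ} := by
      refine ⟨0, ?_⟩
      rintro r ⟨ω, h1, h2, rfl⟩
      exact hD₁ ω σ h1 h2 hσ hσ1
    have hL0 : 0 ≤ L := le_csInf hS1ne (by rintro r ⟨ω, h1, h2, rfl⟩; exact hD₁ ω σ h1 h2 hσ hσ1)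
    rw [Metric.tendsto_nhds]
    intro ε hε
    obtain ⟨r0, hr0mem, hr0lt⟩ : ∃ r0 ∈ {r : ℝ | ∃ ω : Matrix (Fin n) (Fin n) ℂ,
        ω.PosSemidef ∧ ω.trace = 1 ∧ r = D₁ ω σ}, r0 < L + ε / 2 :=
      exists_lt_of_csInf_lt hS1ne (by linarith)
    obtain ⟨ω₀, hω₀1, hω₀2, rfl⟩ := hr0mem
    set d := D₀ ω₀ ρ with hd
    have hd0 : 0 ≤ d := hD₀ ω₀ ρ hω₀1 hω₀2 hρ hρ1
    set η : ℝ := min (1/2) (ε / (4 * (d + 1))) with hη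
    have hηpos : 0 < η := by
      apply lt_min (by norm_num)
      positivity
    have hmem : Set.Ioo (0:ℝ) η ∈ 𝓝[>] (0:ℝ) :=
      Ioo_mem_nhdsGT_of_mem (by constructor <;> simp [hηpos.le, hηpos])
    filter_upwards [hmem] with α hα
    obtain ⟨hα0, hαη⟩ := hα
    have hαhalf : α < 1/2 := lt_of_lt_of_le hαη (min_le_left _ _)
    have hαε : α < ε / (4 * (d + 1)) := lt_of_lt_of_le hαη (min_le_right _ _)
    have h1α : 0 < 1 - α := by linarith
    have hbdd := hRbdd α hα0.le (by linarith)
    have hFle : sInf (R α) ≤ α * d + (1 - α) * D₁ ω₀ σ :=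
      csInf_le hbdd ⟨ω₀, hω₀1, hω₀2, rfl⟩
    have hFge : (1 - α) * L ≤ sInf (R α) := by
      apply le_csInf (hRne α)
      rintro r ⟨ω, h1, h2, rfl⟩
      have hLle : L ≤ D₁ ω σ := csInf_le hS1bdd ⟨ω, h1, h2, rfl⟩
      have hd0' := hD₀ ω ρ h1 h2 hρ hρ1
      nlinarith
    have hinv : 0 < 1 / (1 - α) := by positivity
    rw [Real.dist_eq, abs_lt]
    have hlow : L ≤ 1 / (1 - α) * sInf (R α) := by
      have := mul_le_mul_of_nonneg_left hFge hinv.le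
      calc L = 1 / (1 - α) * ((1 - α) * L) := by field_simp
        _ ≤ 1 / (1 - α) * sInf (R α) := this
    have hup : 1 / (1 - α) * sInf (R α) < L + ε := by
      have h2 := mul_le_mul_of_nonneg_left hFle hinv.le
      have h3 : 1 / (1 - α) * (α * d + (1 - α) * D₁ ω₀ σ)
          = α / (1 - α) * d + D₁ ω₀ σ := by field_simp
      have h4 : α / (1 - α) * d ≤ 2 * α * d := by
        apply mul_le_mul_of_nonneg_right _ hd0
        rw [div_le_iff₀ h1α]
        nlinarith
      have h5 : 2 * α * d ≤ ε / 2 := by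
        have h51 : α * (4 * (d + 1)) ≤ ε := (le_div_iff₀ (by positivity)).mp hαε.le
        nlinarith
      nlinarith
    constructor <;> linarith
  · -- Part (ii)
    intro hpos hlsc0 hlsc1
    set S : Set (Matrix (Fin n) (Fin n) ℂ) :=
      {ω : Matrix (Fin n) (Fin n) ℂ | ω.PosSemidef ∧ ω.trace = 1} with hSdef
    have hρmem : ρ ∈ S := ⟨hρS, hρ1⟩
    set m := D₁ ρ σ with hm
    have hD₀ρ : D₀ ρ ρ = 0 := (hpos ρ hρS hρ1).2 rfl
    rw [Metric.tendsto_nhds]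
    intro ε hε
    -- neighborhood where D₁ is > m - ε/2
    have hev : ∀ᶠ ω in 𝓝 ρ, ω ∈ S → m - ε/2 < D₁ ω σ := by
      have := hlsc1 ρ hρmem (m - ε/2) (by simp only [← hm]; linarith)
      rwa [eventually_nhdsWithin_iff] at this
    obtain ⟨V, hVsub, hVopen, hρV⟩ := mem_nhds_iff.mp hev
    set K : Set (Matrix (Fin n) (Fin n) ℂ) := S ∩ Vᶜ with hK
    have hKcompact : IsCompact K := isCompact_states.inter_right hVopen.isClosed_compl
    have hKpos : ∀ ω ∈ K, 0 < D₀ ω ρ := by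
      rintro ω ⟨⟨h1, h2⟩, hωV⟩
      refine lt_of_le_of_ne (hD₀ ω ρ h1 h2 hρ hρ1) ?_
      intro h0
      have hωρ : ω = ρ := (hpos ω h1 h2).1 h0.symm
      exact hωV (by rw [hωρ]; exact hρV)
    obtain ⟨c, hc, hcK⟩ := lsc_pos_uniform hKcompact
      (hlsc0.mono (Set.inter_subset_left)) hKpos
    set η : ℝ := min (1/2) (c / (2 * (|m - ε/2| + 1))) with hη
    have hηpos : 0 < η := by
      apply lt_min (by norm_num)
      positivity
    have hη1 : η ≤ 1/2 := min_le_left _ _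
    have hη2 : η ≤ c / (2 * (|m - ε/2| + 1)) := min_le_right _ _
    have hmem : Set.Ioo (1 - η) 1 ∈ 𝓝[<] (1:ℝ) :=
      Ioo_mem_nhdsLT_of_mem (by constructor <;> [linarith; rfl])
    filter_upwards [hmem] with α hα
    obtain ⟨hα1, hα2⟩ := hα
    have h1α : 0 < 1 - α := by linarith
    have hαhalf : 1/2 ≤ α := by
      have : 1 - α < η := by linarith
      linarith [hη1]
    have hbdd := hRbdd α (by linarith) hα2.le
    have hFle : sInf (R α) ≤ (1 - α) * m := by
      have : sInf (R α) ≤ α * D₀ ρ ρ + (1 - α) * D₁ ρ σ :=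
        csInf_le hbdd ⟨ρ, hρS, hρ1, rfl⟩
      rwa [hD₀ρ, mul_zero, zero_add] at this
    have hkey : (1 - α) * (m - ε/2) ≤ (1 - α) * |m - ε/2|
        ∧ (1 - α) * |m - ε/2| ≤ c / 2 := by
      constructor
      · exact mul_le_mul_of_nonneg_left (le_abs_self _) h1α.le
      · have h6 : 1 - α < η := by linarith
        have h7 : (1 - α) * |m - ε/2| ≤ η * (|m - ε/2| + 1) := by
          nlinarith [abs_nonneg (m - ε/2)]
        have h8 : η * (|m - ε/2| + 1) ≤ c / 2 := by
          have hx : (0:ℝ) < |m - ε/2| + 1 := by positivity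
          have h81 := mul_le_mul_of_nonneg_right hη2 hx.le
          have heq : c / (2 * (|m - ε/2| + 1)) * (|m - ε/2| + 1) = c / 2 := by
            field_simp
          linarith
        linarith
    have hFge : (1 - α) * (m - ε/2) ≤ sInf (R α) := by
      apply le_csInf (hRne α)
      rintro r ⟨ω, h1, h2, rfl⟩
      by_cases hωV : ω ∈ V
      · have hD1 : m - ε/2 < D₁ ω σ := hVsub hωV ⟨h1, h2⟩
        have hd0' := hD₀ ω ρ h1 h2 hρ hρ1
        have ha1 : (1 - α) * (m - ε/2) ≤ (1 - α) * D₁ ω σ :=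
          mul_le_mul_of_nonneg_left hD1.le h1α.le
        have ha2 : 0 ≤ α * D₀ ω ρ := mul_nonneg (by linarith) hd0'
        linarith
      · have hωK : ω ∈ K := ⟨⟨h1, h2⟩, hωV⟩
        have hcω : c ≤ D₀ ω ρ := hcK ω hωK
        have hd1' := hD₁ ω σ h1 h2 hσ hσ1
        have hαc : 1/2 * c ≤ α * D₀ ω ρ :=
          mul_le_mul hαhalf hcω hc.le (by linarith)
        have ha2 : 0 ≤ (1 - α) * D₁ ω σ := mul_nonneg h1α.le hd1'
        linarith [hkey.1, hkey.2]
    have hinv : 0 < 1 / (1 - α) := by positivity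
    rw [Real.dist_eq, abs_lt]
    have hlow : m - ε/2 ≤ 1 / (1 - α) * sInf (R α) := by
      have := mul_le_mul_of_nonneg_left hFge hinv.le
      calc m - ε/2 = 1 / (1 - α) * ((1 - α) * (m - ε/2)) := by field_simp
        _ ≤ 1 / (1 - α) * sInf (R α) := this
    have hup : 1 / (1 - α) * sInf (R α) ≤ m := by
      have := mul_le_mul_of_nonneg_left hFle hinv.le
      calc 1 / (1 - α) * sInf (R α) ≤ 1 / (1 - α) * ((1 - α) * m) := this
        _ = m := by field_simp
    constructor <;> linarith
end

section
/- Let α ∈ (0,1), and let D₀, D₁ be nonnegative real-valued functions on pairs (ω, τ) with ω a state (n×n) and τ a positive definite state, such that D_i(ω, ω) = 0 for every positive definite state ω (i = 0, 1). For positive definite states ρ, σ set D_α^b(ρ‖σ) := (1/(1−α))·inf { α·D₀(ω, ρ) + (1−α)·D₁(ω, σ) : ω a state }. Then: (a) D_α^b(ρ‖σ) ≥ 0 for all positive definite states ρ, σ; (b) if ρ = σ then D_α^b(ρ‖σ) = 0; (c) if in addition D₀ and D₁ are strictly positive (D_i(ω, τ) = 0 if and only if ω = τ, for states ω and positive definite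 states τ) and lower semicontinuous in their first arguments on the set of states, then D_α^b(ρ‖σ) = 0 implies ρ = σ. -/
open Matrix Filter Topology
open scoped ComplexOrder


open scoped MatrixOrder in
private lemma entry_norm_le {n : ℕ} {ω : Matrix (Fin n) (Fin n) ℂ}
    (hω : ω.PosSemidef) (htr : ω.trace = 1) (i j : Fin n) : ‖ω i j‖ ≤ 1 := by
  classical
  set s : Matrix (Fin n) (Fin n) ℂ := CFC.sqrt ω with hs
  have hherm : sᴴ = s := (CFC.sqrt_nonneg ω).posSemidef.1
  have hmul : s * s = ω := CFC.sqrt_mul_sqrt_self ω hω.nonneg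
  have hstar : ∀ a b : Fin n, s a b = star (s b a) := by
    intro a b
    conv_lhs => rw [← hherm]
    simp [Matrix.conjTranspose_apply]
  have hrow : ∀ a : Fin n, (ω a a).re = ∑ k, ‖s a k‖ ^ 2 := by
    intro a
    have h1 : ω a a = ∑ k, (‖s a k‖ ^ 2 : ℂ) := by
      rw [← hmul, Matrix.mul_apply]
      refine Finset.sum_congr rfl fun k _ => ?_
      rw [hstar k a]
      rw [show (star (s a k) : ℂ) = starRingEnd ℂ (s a k) from rfl, Complex.mul_conj]
      rw [Complex.normSq_eq_norm_sq]
      push_cast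
      rfl
    rw [h1, Complex.re_sum]
    simp [← Complex.ofReal_pow]
  have hcol : ∀ a : Fin n, (ω a a).re = ∑ k, ‖s k a‖ ^ 2 := by
    intro a
    rw [hrow a]
    refine Finset.sum_congr rfl fun k _ => ?_
    rw [hstar a k, norm_star]
  have hnn : ∀ a : Fin n, 0 ≤ (ω a a).re := fun a => by
    rw [hrow a]; exact Finset.sum_nonneg fun k _ => sq_nonneg _
  have htr' : ∑ a, (ω a a).re = 1 := by
    have : (ω.trace).re = 1 := by rw [htr]; simp
    rwa [Matrix.trace, Complex.re_sum] at this
  have hle1 : ∀ a : Fin n, (ω a a).re ≤ 1 := fun a => by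
    rw [← htr']
    exact Finset.single_le_sum (fun b _ => hnn b) (Finset.mem_univ a)
  have hb : ‖ω i j‖ ≤ ∑ k, ‖s i k‖ * ‖s k j‖ := by
    rw [← hmul, Matrix.mul_apply]
    refine (norm_sum_le _ _).trans (le_of_eq ?_)
    exact Finset.sum_congr rfl fun k _ => norm_mul _ _
  have hcs := Finset.sum_mul_sq_le_sq_mul_sq Finset.univ
    (fun k => ‖s i k‖) (fun k => ‖s k j‖)
  have hsq : (∑ k, ‖s i k‖ * ‖s k j‖) ^ 2 ≤ 1 := by
    refine hcs.trans ?_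
    rw [← hrow i, ← hcol j]
    exact mul_le_one₀ (hle1 i) (hnn j) (hle1 j)
  have hsum_nn : 0 ≤ ∑ k, ‖s i k‖ * ‖s k j‖ :=
    Finset.sum_nonneg fun k _ => mul_nonneg (norm_nonneg _) (norm_nonneg _)
  nlinarith [hb, hsq, hsum_nn, norm_nonneg (ω i j)]


private lemma states_isCompact (n : ℕ) :
    IsCompact {ω : Matrix (Fin n) (Fin n) ℂ | ω.PosSemidef ∧ ω.trace = 1} := by
  have hK : IsCompact {M : Matrix (Fin n) (Fin n) ℂ |
      ∀ i j, M i j ∈ Metric.closedBall (0 : ℂ) 1} := by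
    have h := isCompact_univ_pi (ι := Fin n)
      (s := fun _ : Fin n => Set.univ.pi fun _ : Fin n => Metric.closedBall (0 : ℂ) 1)
      (fun _ => isCompact_univ_pi fun _ => isCompact_closedBall 0 1)
    have heq : {M : Matrix (Fin n) (Fin n) ℂ | ∀ i j, M i j ∈ Metric.closedBall (0 : ℂ) 1} =
        Set.univ.pi fun _ : Fin n => Set.univ.pi fun _ : Fin n => Metric.closedBall (0 : ℂ) 1 := by
      ext M
      refine ⟨fun hM => Set.mem_pi.mpr fun i _ => Set.mem_pi.mpr fun j _ => ?_,
        fun hM i j => ?_⟩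
      · simpa [Metric.mem_closedBall, Complex.dist_eq] using hM i j
      · have := Set.mem_pi.mp (Set.mem_pi.mp hM i (Set.mem_univ i)) j (Set.mem_univ j)
        simpa [Metric.mem_closedBall, Complex.dist_eq] using this
    rw [heq]
    exact h
  refine hK.of_isClosed_subset ?_ ?_
  · have h1 : IsClosed {ω : Matrix (Fin n) (Fin n) ℂ | ω.trace = 1} :=
      isClosed_eq (continuous_id.matrix_trace) continuous_const
    have h2 : IsClosed {ω : Matrix (Fin n) (Fin n) ℂ | ω.PosSemidef} := by
      have heq : {ω : Matrix (Fin n) (Fin n) ℂ | ω.PosSemidef} =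
          {ω : Matrix (Fin n) (Fin n) ℂ | ωᴴ = ω} ∩
            ⋂ x : Fin n → ℂ, {ω : Matrix (Fin n) (Fin n) ℂ | 0 ≤ star x ⬝ᵥ ω *ᵥ x} := by
        ext ω
        simp only [Set.mem_inter_iff, Set.mem_iInter, Set.mem_setOf_eq]
        exact ⟨fun h => ⟨h.1, h.dotProduct_mulVec_nonneg⟩, fun h => .of_dotProduct_mulVec_nonneg h.1 h.2⟩
      rw [heq]
      refine IsClosed.inter (isClosed_eq (continuous_id.matrix_conjTranspose) continuous_id)
        (isClosed_iInter fun x => ?_)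
      have hcont : Continuous fun ω : Matrix (Fin n) (Fin n) ℂ => star x ⬝ᵥ ω *ᵥ x :=
        continuous_const.dotProduct (continuous_id.matrix_mulVec continuous_const)
      have hcl : IsClosed {z : ℂ | 0 ≤ z} := by
        have : {z : ℂ | 0 ≤ z} = Complex.re ⁻¹' Set.Ici 0 ∩ Complex.im ⁻¹' {0} := by
          ext z
          simp [Complex.nonneg_iff, eq_comm]
        rw [this]
        exact (isClosed_Ici.preimage Complex.continuous_re).inter
          (isClosed_singleton.preimage Complex.continuous_im)
      exact hcl.preimage hcont
    have : {ω : Matrix (Fin n) (Fin n) ℂ | ω.PosSemidef ∧ ω.trace = 1} =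
        {ω : Matrix (Fin n) (Fin n) ℂ | ω.PosSemidef} ∩
          {ω : Matrix (Fin n) (Fin n) ℂ | ω.trace = 1} := rfl
    rw [this]
    exact h2.inter h1
  · rintro ω ⟨hpsd, htr⟩ i j
    simpa [Metric.mem_closedBall, dist_zero_right] using entry_norm_le hpsd htr i j

private lemma lsc_limit_zero {X : Type*} [TopologicalSpace X] {S : Set X} {g : X → ℝ}
    (hg : LowerSemicontinuousOn g S) {w : X} (hw : w ∈ S) {v : ℕ → X}
    (hv : ∀ k, v k ∈ S) (hvw : Tendsto v atTop (𝓝 w))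
    (hg0 : Tendsto (fun k => g (v k)) atTop (𝓝 0)) : g w ≤ 0 := by
  by_contra hpos
  push_neg at hpos
  have hvw' : Tendsto v atTop (𝓝[S] w) :=
    tendsto_nhdsWithin_of_tendsto_nhds_of_eventually_within v hvw (Eventually.of_forall hv)
  have h1 : ∀ᶠ k in atTop, g w / 2 < g (v k) :=
    hvw'.eventually (hg w hw (g w / 2) (half_lt_self hpos))
  have h2 : ∀ᶠ k in atTop, g (v k) < g w / 2 := hg0.eventually_lt_const (by linarith)
  obtain ⟨k, hk1, hk2⟩ := (h1.and h2).exists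
  linarith

/-- **Nonnegativity and strict positivity of barycentric Rényi divergences.**
Let `α ∈ (0,1)` and `D₀, D₁` nonnegative real-valued functions on pairs
(state, positive definite state) vanishing on the diagonal at positive definite states. Set
`D_α^b(ρ‖σ) := (1/(1−α)) · inf { α·D₀(ω,ρ) + (1−α)·D₁(ω,σ) : ω a state }` for
positive definite states `ρ, σ`. Then `D_α^b ≥ 0`, `D_α^b(ρ‖ρ) = 0`, and if moreover
`D₀, D₁` are strictly positive and lower semicontinuous in their first arguments on the set of
states, then `D_α^b(ρ‖σ) = 0` implies `ρ = σ`. -/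
theorem barycentric_Renyi_strict_positivity {n : ℕ} (α : ℝ) (hα : α ∈ Set.Ioo (0 : ℝ) 1)
    (D₀ D₁ : Matrix (Fin n) (Fin n) ℂ → Matrix (Fin n) (Fin n) ℂ → ℝ)
    (hD₀ : ∀ ω τ : Matrix (Fin n) (Fin n) ℂ,
      ω.PosSemidef → ω.trace = 1 → τ.PosDef → τ.trace = 1 → 0 ≤ D₀ ω τ)
    (hD₁ : ∀ ω τ : Matrix (Fin n) (Fin n) ℂ,
      ω.PosSemidef → ω.trace = 1 → τ.PosDef → τ.trace = 1 → 0 ≤ D₁ ω τ)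
    (hdiag₀ : ∀ ω : Matrix (Fin n) (Fin n) ℂ, ω.PosDef → ω.trace = 1 → D₀ ω ω = 0)
    (hdiag₁ : ∀ ω : Matrix (Fin n) (Fin n) ℂ, ω.PosDef → ω.trace = 1 → D₁ ω ω = 0) :
    (∀ ρ σ : Matrix (Fin n) (Fin n) ℂ,
      ρ.PosDef → ρ.trace = 1 → σ.PosDef → σ.trace = 1 →
      0 ≤ (1 / (1 - α)) * sInf {r : ℝ | ∃ ω : Matrix (Fin n) (Fin n) ℂ,
          ω.PosSemidef ∧ ω.trace = 1 ∧ r = α * D₀ ω ρ + (1 - α) * D₁ ω σ})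
    ∧ (∀ ρ : Matrix (Fin n) (Fin n) ℂ, ρ.PosDef → ρ.trace = 1 →
      (1 / (1 - α)) * sInf {r : ℝ | ∃ ω : Matrix (Fin n) (Fin n) ℂ,
          ω.PosSemidef ∧ ω.trace = 1 ∧ r = α * D₀ ω ρ + (1 - α) * D₁ ω ρ} = 0)
    ∧ ((∀ ω τ : Matrix (Fin n) (Fin n) ℂ,
          ω.PosSemidef → ω.trace = 1 → τ.PosDef → τ.trace = 1 →
          (D₀ ω τ = 0 ↔ ω = τ)) →
       (∀ ω τ : Matrix (Fin n) (Fin n) ℂ,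
          ω.PosSemidef → ω.trace = 1 → τ.PosDef → τ.trace = 1 →
          (D₁ ω τ = 0 ↔ ω = τ)) →
       (∀ τ : Matrix (Fin n) (Fin n) ℂ, τ.PosDef → τ.trace = 1 →
          LowerSemicontinuousOn (fun ω => D₀ ω τ)
            {ω : Matrix (Fin n) (Fin n) ℂ | ω.PosSemidef ∧ ω.trace = 1}) →
       (∀ τ : Matrix (Fin n) (Fin n) ℂ, τ.PosDef → τ.trace = 1 →
          LowerSemicontinuousOn (fun ω => D₁ ω τ)
            {ω : Matrix (Fin n) (Fin n) ℂ | ω.PosSemidef ∧ ω.trace = 1}) →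
       ∀ ρ σ : Matrix (Fin n) (Fin n) ℂ,
          ρ.PosDef → ρ.trace = 1 → σ.PosDef → σ.trace = 1 →
          (1 / (1 - α)) * sInf {r : ℝ | ∃ ω : Matrix (Fin n) (Fin n) ℂ,
              ω.PosSemidef ∧ ω.trace = 1 ∧ r = α * D₀ ω ρ + (1 - α) * D₁ ω σ} = 0 →
          ρ = σ) := by

  obtain ⟨hα0, hα1⟩ := hα
  have h1α : (0:ℝ) < 1 - α := by linarith
  have hcpos : (0:ℝ) < 1 / (1 - α) := by positivity
  refine ⟨?_, ?_, ?_⟩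
  · -- nonnegativity
    intro ρ σ hρ hρt hσ hσt
    refine mul_nonneg hcpos.le (le_csInf ⟨_, ρ, hρ.posSemidef, hρt, rfl⟩ ?_)
    rintro r ⟨ω, hω, hωt, rfl⟩
    exact add_nonneg (mul_nonneg hα0.le (hD₀ ω ρ hω hωt hρ hρt))
      (mul_nonneg h1α.le (hD₁ ω σ hω hωt hσ hσt))
  · -- vanishing on the diagonal
    intro ρ hρ hρt
    have hlb : ∀ r ∈ {r : ℝ | ∃ ω : Matrix (Fin n) (Fin n) ℂ,
        ω.PosSemidef ∧ ω.trace = 1 ∧ r = α * D₀ ω ρ + (1 - α) * D₁ ω ρ}, (0:ℝ) ≤ r := by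
      rintro r ⟨ω, hω, hωt, rfl⟩
      exact add_nonneg (mul_nonneg hα0.le (hD₀ ω ρ hω hωt hρ hρt))
        (mul_nonneg h1α.le (hD₁ ω ρ hω hωt hρ hρt))
    have h0mem : (0:ℝ) ∈ {r : ℝ | ∃ ω : Matrix (Fin n) (Fin n) ℂ,
        ω.PosSemidef ∧ ω.trace = 1 ∧ r = α * D₀ ω ρ + (1 - α) * D₁ ω ρ} :=
      ⟨ρ, hρ.posSemidef, hρt, by rw [hdiag₀ ρ hρ hρt, hdiag₁ ρ hρ hρt]; ring⟩
    have : sInf {r : ℝ | ∃ ω : Matrix (Fin n) (Fin n) ℂ,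
        ω.PosSemidef ∧ ω.trace = 1 ∧ r = α * D₀ ω ρ + (1 - α) * D₁ ω ρ} = 0 :=
      le_antisymm (csInf_le ⟨0, hlb⟩ h0mem) (le_csInf ⟨0, h0mem⟩ hlb)
    rw [this, mul_zero]
  · -- strict positivity
    intro hsp₀ hsp₁ hlsc₀ hlsc₁ ρ σ hρ hρt hσ hσt heq
    set T : Set ℝ := {r : ℝ | ∃ ω : Matrix (Fin n) (Fin n) ℂ,
        ω.PosSemidef ∧ ω.trace = 1 ∧ r = α * D₀ ω ρ + (1 - α) * D₁ ω σ} with hT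
    have hTne : T.Nonempty := ⟨_, ρ, hρ.posSemidef, hρt, rfl⟩
    have hsInf : sInf T = 0 := by
      rcases mul_eq_zero.mp heq with h | h
      · exact absurd h hcpos.ne'
      · exact h
    -- minimizing sequence
    have hseq : ∀ k : ℕ, ∃ ω : Matrix (Fin n) (Fin n) ℂ,
        (ω.PosSemidef ∧ ω.trace = 1) ∧
          α * D₀ ω ρ + (1 - α) * D₁ ω σ < 1 / ((k : ℝ) + 1) := by
      intro k
      have hlt : sInf T < 1 / ((k : ℝ) + 1) := by rw [hsInf]; positivity
      obtain ⟨r, ⟨ω, hω, hωt, rfl⟩, hr⟩ := exists_lt_of_csInf_lt hTne hlt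
      exact ⟨ω, ⟨hω, hωt⟩, hr⟩
    choose u hu hflt using hseq
    haveI : FirstCountableTopology (Matrix (Fin n) (Fin n) ℂ) :=
      inferInstanceAs (FirstCountableTopology (Fin n → Fin n → ℂ))
    obtain ⟨w, hwS, φ, hφ, hconv⟩ :=
      (states_isCompact n).tendsto_subseq (x := u) fun k => hu k
    -- both scaled divergences tend to zero along the subsequence
    have hmono : ∀ k : ℕ, (1 : ℝ) / ((φ k : ℝ) + 1) ≤ 1 / ((k : ℝ) + 1) := by
      intro k
      have : ((k : ℝ) + 1) ≤ ((φ k : ℝ) + 1) := by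
        have := hφ.le_apply (x := k)
        exact_mod_cast Nat.add_le_add_right this 1
      exact one_div_le_one_div_of_le (by positivity) this
    have htend : Tendsto (fun k : ℕ => (1 / ((k : ℝ) + 1)) / α) atTop (𝓝 0) := by
      simpa using tendsto_one_div_add_atTop_nhds_zero_nat.div_const α
    have htend' : Tendsto (fun k : ℕ => (1 / ((k : ℝ) + 1)) / (1 - α)) atTop (𝓝 0) := by
      simpa using tendsto_one_div_add_atTop_nhds_zero_nat.div_const (1 - α)
    have hterm₀ : ∀ k : ℕ, 0 ≤ D₀ (u (φ k)) ρ :=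
      fun k => hD₀ _ ρ (hu (φ k)).1 (hu (φ k)).2 hρ hρt
    have hterm₁ : ∀ k : ℕ, 0 ≤ D₁ (u (φ k)) σ :=
      fun k => hD₁ _ σ (hu (φ k)).1 (hu (φ k)).2 hσ hσt
    have hbound : ∀ k : ℕ, α * D₀ (u (φ k)) ρ + (1 - α) * D₁ (u (φ k)) σ
        ≤ 1 / ((k : ℝ) + 1) := fun k => (hflt (φ k)).le.trans (hmono k)
    have ht₀ : Tendsto (fun k : ℕ => D₀ (u (φ k)) ρ) atTop (𝓝 0) := by
      refine squeeze_zero hterm₀ (fun k => ?_) htend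
      refine (le_div_iff₀ hα0).mpr ?_
      have h1 := hbound k
      have h2 := mul_nonneg h1α.le (hterm₁ k)
      nlinarith [hterm₀ k]
    have ht₁ : Tendsto (fun k : ℕ => D₁ (u (φ k)) σ) atTop (𝓝 0) := by
      refine squeeze_zero hterm₁ (fun k => ?_) htend'
      refine (le_div_iff₀ h1α).mpr ?_
      have h1 := hbound k
      have h2 := mul_nonneg hα0.le (hterm₀ k)
      nlinarith [hterm₁ k]
    have hw₀ : D₀ w ρ = 0 :=
      le_antisymm
        (lsc_limit_zero (hlsc₀ ρ hρ hρt) hwS (fun k => hu (φ k)) hconv ht₀)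
        (hD₀ w ρ hwS.1 hwS.2 hρ hρt)
    have hw₁ : D₁ w σ = 0 :=
      le_antisymm
        (lsc_limit_zero (hlsc₁ σ hσ hσt) hwS (fun k => hu (φ k)) hconv ht₁)
        (hD₁ w σ hwS.1 hwS.2 hσ hσt)
    have hρw : w = ρ := (hsp₀ w ρ hwS.1 hwS.2 hρ hρt).mp hw₀
    have hσw : w = σ := (hsp₁ w σ hwS.1 hwS.2 hσ hσt).mp hw₁
    rw [← hρw, hσw]
end

section
/- For every α ∈ (0,1) and all real λ, η ∈ (0,∞) with λ ≠ η: (log λ − log η)/(λ − η) > (1/α)·((λ^α − η^α)/(λ − η)) · (1/(1−α))·((λ^{1−α} − η^{1−α})/(λ − η)). Equivalently, α·(1−α)·(log λ − log η)·(λ − η) > (λ^α − η^α)·(λ^{1−α} − η^{1−α}). -/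
open Real Set

private lemma rpow_prod_expand {e x α : ℝ} (he : 0 < e) (hx : 0 < x) :
    (x ^ α - e ^ α) * (x ^ (1 - α) - e ^ (1 - α))
      = x + e - e ^ (1 - α) * x ^ α - e ^ α * x ^ (1 - α) := by
  have hxx : x ^ α * x ^ (1 - α) = x := by
    rw [← Real.rpow_add hx]; norm_num
  have hee : e ^ α * e ^ (1 - α) = e := by
    rw [← Real.rpow_add he]; norm_num
  linear_combination hxx + hee

private lemma key_ineq (α : ℝ) (hα0 : 0 < α) (hα1 : α < 1) (e l : ℝ)
    (he : 0 < e) (hel : e < l) :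
    (l ^ α - e ^ α) * (l ^ (1 - α) - e ^ (1 - α))
      < α * (1 - α) * (Real.log l - Real.log e) * (l - e) := by
  have h1α : 0 < 1 - α := by linarith
  set F : ℝ → ℝ := fun x =>
    α * (1 - α) * (Real.log x - Real.log e) * (x - e)
      - (x ^ α - e ^ α) * (x ^ (1 - α) - e ^ (1 - α)) with hFdef
  set G : ℝ → ℝ := fun x =>
    α * (1 - α) * (1 - e * x⁻¹ + Real.log x - Real.log e) - 1
      + α * e ^ (1 - α) * x ^ (α - 1) + (1 - α) * e ^ α * x ^ (-α) with hGdef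
  -- derivative of F is G
  have hderivF : ∀ x : ℝ, 0 < x → HasDerivAt F (G x) x := by
    intro x hx
    have hlog : HasDerivAt (fun y : ℝ => Real.log y - Real.log e) x⁻¹ x :=
      (Real.hasDerivAt_log hx.ne').sub_const _
    have hid : HasDerivAt (fun y : ℝ => y - e) 1 x := (hasDerivAt_id x).sub_const e
    have hp1 : HasDerivAt (fun y : ℝ => y ^ α - e ^ α) (α * x ^ (α - 1)) x :=
      (Real.hasDerivAt_rpow_const (Or.inl hx.ne')).sub_const _
    have hp2 : HasDerivAt (fun y : ℝ => y ^ (1 - α) - e ^ (1 - α))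
        ((1 - α) * x ^ (-α)) x := by
      have := (Real.hasDerivAt_rpow_const (p := 1 - α) (Or.inl hx.ne')).sub_const
        (e ^ (1 - α))
      rwa [show (1 - α - 1 : ℝ) = -α by ring] at this
    have h := ((hlog.const_mul (α * (1 - α))).mul hid).sub (hp1.mul hp2)
    refine h.congr_deriv ?_
    symm
    have hxa : x ^ (α - 1) * x ^ (1 - α) = 1 := by
      rw [← Real.rpow_add hx]; norm_num
    have hxb : x ^ α * x ^ (-α) = 1 := by
      rw [← Real.rpow_add hx]; norm_num
    have hxne : x ≠ 0 := hx.ne'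
    field_simp [hGdef]
    linear_combination (α*x)*hxa + ((1-α)*x)*hxb - (α*e*(1-α))*(mul_inv_cancel₀ hxne)
  -- derivative of G
  set D : ℝ → ℝ := fun x =>
    α * (1 - α) * (0 - e * -(x ^ 2)⁻¹ + x⁻¹) + α * e ^ (1 - α) * ((α - 1) * x ^ (α - 2))
      + (1 - α) * e ^ α * (-α * x ^ (-α - 1)) with hDdef
  have hderivG : ∀ x : ℝ, 0 < x → HasDerivAt G (D x) x := by
    intro x hx
    have hinv : HasDerivAt (fun y : ℝ => y⁻¹) (-(x ^ 2)⁻¹) x := hasDerivAt_inv hx.ne'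
    have hlog : HasDerivAt Real.log x⁻¹ x := Real.hasDerivAt_log hx.ne'
    have hq1 : HasDerivAt (fun y : ℝ => y ^ (α - 1)) ((α - 1) * x ^ (α - 2)) x := by
      have := Real.hasDerivAt_rpow_const (p := α - 1) (Or.inl hx.ne')
      rwa [show (α - 1 - 1 : ℝ) = α - 2 by ring] at this
    have hq2 : HasDerivAt (fun y : ℝ => y ^ (-α)) ((-α) * x ^ (-α - 1)) x :=
      Real.hasDerivAt_rpow_const (p := -α) (Or.inl hx.ne')
    have hpart : HasDerivAt
        (fun y : ℝ => 1 - e * y⁻¹ + Real.log y - Real.log e)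
        (0 - e * -(x ^ 2)⁻¹ + x⁻¹) x :=
      (((hasDerivAt_const x (1:ℝ)).sub (hinv.const_mul e)).add hlog).sub_const _
    exact (((hpart.const_mul (α * (1 - α))).sub_const 1).add
        (hq1.const_mul (α * e ^ (1 - α)))).add (hq2.const_mul ((1 - α) * e ^ α))
  -- D is positive on (e, ∞)
  have hDpos : ∀ x : ℝ, e < x → 0 < D x := by
    intro x hex
    have hx : 0 < x := he.trans hex
    have hxa : x ^ (α - 2) = x ^ α / x ^ 2 := by
      rw [show (α - 2 : ℝ) = α - (2:ℕ) by norm_num, Real.rpow_sub hx, Real.rpow_natCast]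
    have hxb : x ^ (-α - 1) = x ^ (1 - α) / x ^ 2 := by
      rw [show (-α - 1 : ℝ) = 1 - α - (2:ℕ) by push_cast; ring, Real.rpow_sub hx,
        Real.rpow_natCast]
    have hprod : 0 < (x ^ α - e ^ α) * (x ^ (1 - α) - e ^ (1 - α)) := by
      have h1 : e ^ α < x ^ α := Real.rpow_lt_rpow he.le hex hα0
      have h2 : e ^ (1 - α) < x ^ (1 - α) := Real.rpow_lt_rpow he.le hex h1α
      exact mul_pos (by linarith) (by linarith)
    have hkey : D x
        = α * (1 - α) * ((x ^ α - e ^ α) * (x ^ (1 - α) - e ^ (1 - α))) / x ^ 2 := by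
      simp only [hDdef]
      rw [hxa, hxb, rpow_prod_expand he hx]
      field_simp
      ring
    rw [hkey]
    positivity
  -- G e = 0
  have hGe : G e = 0 := by
    have h1 : e ^ (1 - α) * e ^ (α - 1) = 1 := by
      rw [← Real.rpow_add he]; norm_num
    have h2 : e ^ α * e ^ (-α) = 1 := by
      rw [← Real.rpow_add he]; norm_num
    simp only [hGdef]
    rw [mul_inv_cancel₀ he.ne']
    nlinarith [h1, h2]
  -- G is positive on (e, ∞)
  have hGpos : ∀ x : ℝ, e < x → 0 < G x := by
    intro x hex
    have hmono : StrictMonoOn G (Set.Ici e) := by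
      refine strictMonoOn_of_deriv_pos (convex_Ici e) ?_ ?_
      · intro y hy
        exact (hderivG y (he.trans_le hy)).continuousAt.continuousWithinAt
      · intro y hy
        rw [interior_Ici] at hy
        rw [(hderivG y (he.trans hy)).deriv]
        exact hDpos y hy
    have := hmono Set.self_mem_Ici (Set.mem_Ici.mpr hex.le) hex
    rwa [hGe] at this
  -- F is strictly increasing on [e, ∞), and F e = 0
  have hFe : F e = 0 := by simp [hFdef]
  have hFmono : StrictMonoOn F (Set.Ici e) := by
    refine strictMonoOn_of_deriv_pos (convex_Ici e) ?_ ?_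
    · intro y hy
      exact (hderivF y (he.trans_le hy)).continuousAt.continuousWithinAt
    · intro y hy
      rw [interior_Ici] at hy
      rw [(hderivF y (he.trans hy)).deriv]
      exact hGpos y hy
  have hFl : 0 < F l := by
    have := hFmono Set.self_mem_Ici (Set.mem_Ici.mpr hel.le) hel
    rwa [hFe] at this
  simp only [hFdef] at hFl
  linarith

/-- **A logarithmic-mean inequality.** For every `α ∈ (0,1)` and all positive reals
`λ ≠ η`:
`(log λ − log η)/(λ − η) > (1/α)·((λ^α − η^α)/(λ − η)) · (1/(1−α))·((λ^{1−α} − η^{1−α})/(λ − η))`,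
equivalently
`α·(1−α)·(log λ − log η)·(λ − η) > (λ^α − η^α)·(λ^{1−α} − η^{1−α})`. -/
theorem log_mean_power_inequality (α : ℝ) (hα : α ∈ Set.Ioo (0 : ℝ) 1)
    (lam eta : ℝ) (hlam : 0 < lam) (heta : 0 < eta) (hne : lam ≠ eta) :
    ((Real.log lam - Real.log eta) / (lam - eta)
        > (1 / α) * ((lam ^ α - eta ^ α) / (lam - eta))
          * ((1 / (1 - α)) * ((lam ^ (1 - α) - eta ^ (1 - α)) / (lam - eta))))
    ∧ (α * (1 - α) * (Real.log lam - Real.log eta) * (lam - eta)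
        > (lam ^ α - eta ^ α) * (lam ^ (1 - α) - eta ^ (1 - α))) := by
  obtain ⟨hα0, hα1⟩ := hα
  have h1α : 0 < 1 - α := by linarith
  -- second (polynomial) form
  have h2 : α * (1 - α) * (Real.log lam - Real.log eta) * (lam - eta)
      > (lam ^ α - eta ^ α) * (lam ^ (1 - α) - eta ^ (1 - α)) := by
    rcases lt_or_gt_of_ne hne with hlt | hlt
    · have hk := key_ineq α hα0 hα1 lam eta hlam hlt
      have e1 : (lam ^ α - eta ^ α) * (lam ^ (1 - α) - eta ^ (1 - α))
          = (eta ^ α - lam ^ α) * (eta ^ (1 - α) - lam ^ (1 - α)) := by ring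
      have e2 : α * (1 - α) * (Real.log lam - Real.log eta) * (lam - eta)
          = α * (1 - α) * (Real.log eta - Real.log lam) * (eta - lam) := by ring
      rw [gt_iff_lt, e1, e2]
      exact hk
    · exact key_ineq α hα0 hα1 eta lam heta hlt
  refine ⟨?_, h2⟩
  -- derive the divided form
  have hd : lam - eta ≠ 0 := sub_ne_zero_of_ne hne
  have hden : 0 < α * (1 - α) * (lam - eta) ^ 2 := by positivity
  rw [gt_iff_lt, ← sub_pos]
  have heq : (Real.log lam - Real.log eta) / (lam - eta)
      - 1 / α * ((lam ^ α - eta ^ α) / (lam - eta))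
          * (1 / (1 - α) * ((lam ^ (1 - α) - eta ^ (1 - α)) / (lam - eta)))
      = (α * (1 - α) * (Real.log lam - Real.log eta) * (lam - eta)
          - (lam ^ α - eta ^ α) * (lam ^ (1 - α) - eta ^ (1 - α)))
        / (α * (1 - α) * (lam - eta) ^ 2) := by
    field_simp
  rw [heq]
  exact div_pos (by linarith) hden
end
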